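/- arXiv:2502.06404 — 6 statements merged into one kernel-verified Lean document; each statement's English description precedes it below -/
import Mathlib

section
/- Let C ⊆ ℝ, x ∈ C, b ∈ ℝ, Y = {x−b, x+b} with Y ∩ C = ∅, and v ∈ T_C^n(Y). If d : 2^{≤n} → ℝ satisfies conditions (I)–(IV) of the averaging lemma (d(∅)=v; d(s) is the average of d(s⌢0), d(s⌢1); leaves lie in Y; all values avoid C), then d is constant: either d(s) = x−b for all s, or d(s) = x+b for all s. -/
open Set

/-- The averaging operator: midpoints of `Z`, with `C` removed. -/
def T (C Z : Set ℝ) : Set ℝ := {v | ∃ y ∈ Z, ∃ y' ∈ Z, v = (y + y') / 2} \ C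

/-- `Tinf C Y = ⋃_{n ≥ 1} T_C^n(Y)`. -/
def Tinf (C Y : Set ℝ) : Set ℝ := ⋃ n ∈ {n : ℕ | 1 ≤ n}, (T C)^[n] Y

theorem stmt5 (C : Set ℝ) (x b : ℝ) (hx : x ∈ C)
    (hY : ({x - b, x + b} : Set ℝ) ∩ C = ∅) (n : ℕ) (v : ℝ)
    (hv : v ∈ (T C)^[n] ({x - b, x + b} : Set ℝ))
    (d : List Bool → ℝ)
    (hI : d [] = v)
    (hII : ∀ s : List Bool, s.length < n →
      d s = (d (s ++ [false]) + d (s ++ [true])) / 2)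
    (hIII : ∀ s : List Bool, s.length = n → d s ∈ ({x - b, x + b} : Set ℝ))
    (hIV : ∀ s : List Bool, s.length ≤ n → d s ∉ C) :
    (∀ s : List Bool, s.length ≤ n → d s = x - b) ∨
    (∀ s : List Bool, s.length ≤ n → d s = x + b) := by
  -- every node value lies in Y
  have memY : ∀ k s, s.length + k = n → d s ∈ ({x - b, x + b} : Set ℝ) := by
    intro k
    induction k with
    | zero => intro s hs; exact hIII s (by simpa using hs)
    | succ k ih =>
      intro s hs
      have hlt : s.length < n := by omega
      have h0 := ih (s ++ [false]) (by simp; omega)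
      have h1 := ih (s ++ [true]) (by simp; omega)
      have havg := hII s hlt
      have hnot := hIV s (le_of_lt hlt)
      simp only [mem_insert_iff, mem_singleton_iff] at h0 h1 ⊢
      rcases h0 with h0 | h0 <;> rcases h1 with h1 | h1
      · left; rw [havg, h0, h1]; ring
      · exfalso; apply hnot
        have : d s = x := by rw [havg, h0, h1]; ring
        rw [this]; exact hx
      · exfalso; apply hnot
        have : d s = x := by rw [havg, h0, h1]; ring
        rw [this]; exact hx
      · right; rw [havg, h0, h1]; ring
  -- children equal parent
  have step : ∀ s (a : Bool), s.length < n → d (s ++ [a]) = d s := by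
    intro s a hlt
    have h0 := memY (n - (s.length + 1)) (s ++ [false]) (by simp; omega)
    have h1 := memY (n - (s.length + 1)) (s ++ [true]) (by simp; omega)
    have havg := hII s hlt
    have hnot := hIV s (le_of_lt hlt)
    simp only [mem_insert_iff, mem_singleton_iff] at h0 h1
    rcases h0 with h0 | h0 <;> rcases h1 with h1 | h1
    · cases a <;> rw [havg, h0, h1] <;> ring
    · exfalso; apply hnot
      have : d s = x := by rw [havg, h0, h1]; ring
      rw [this]; exact hx
    · exfalso; apply hnot
      have : d s = x := by rw [havg, h0, h1]; ring
      rw [this]; exact hx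
    · cases a <;> rw [havg, h0, h1] <;> ring
  -- all values equal d []
  have const : ∀ s : List Bool, s.length ≤ n → d s = d [] := by
    intro s
    induction s using List.reverseRecOn with
    | nil => intro _; rfl
    | append_singleton t a ih =>
      intro h
      have ht : t.length < n := by simp at h; omega
      rw [step t a ht, ih (le_of_lt ht)]
  have hnil := memY n [] (by simp)
  simp only [mem_insert_iff, mem_singleton_iff] at hnil
  rcases hnil with h | h
  · left; intro s hs; rw [const s hs, h]
  · right; intro s hs; rw [const s hs, h]
end

section
/- For every set A ⊆ [0,∞) with 0 ∈ A, there exists a set X ⊆ ℝ whose center of distances equals A, i.e., S(X) = A. -/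
open Set

/-- The center of distances of `X ⊆ ℝ`. -/
def centerOfDistances (X : Set ℝ) : Set ℝ :=
  {a | 0 ≤ a ∧ ∀ x ∈ X, ∃ y ∈ X, |x - y| = a}

open Cardinal

namespace CDAux
noncomputable section
abbrev Bt (A : Set ℝ) := {b : ℝ // 0 < b ∧ b ∉ A}
def esign (e : Bool) : ℝ := if e then 1 else -1
lemma esign_ne_zero (e : Bool) : esign e ≠ 0 := by cases e <;> norm_num [esign]
variable {A : Set ℝ}
def eval (f : Bt A → ℝ) (l : List (Bt A × Bool × ℚ)) : ℝ :=
  (l.map (fun p => (p.2.2 : ℝ) * (f p.1 + esign p.2.1 * p.1.1))).sum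
def wt (l : List (Bt A × Bool × ℚ)) : ℝ :=
  (l.map (fun p => ((p.2.2 : ℚ) : ℝ))).sum
@[simp] lemma eval_nil (f : Bt A → ℝ) : eval f ([] : List (Bt A × Bool × ℚ)) = 0 := rfl
@[simp] lemma eval_cons (f : Bt A → ℝ) (p : Bt A × Bool × ℚ) (l : List (Bt A × Bool × ℚ)) :
    eval f (p :: l) = (p.2.2 : ℝ) * (f p.1 + esign p.2.1 * p.1.1) + eval f l := by
  simp [eval]
@[simp] lemma wt_nil : wt ([] : List (Bt A × Bool × ℚ)) = 0 := rfl
@[simp] lemma wt_cons (p : Bt A × Bool × ℚ) (l : List (Bt A × Bool × ℚ)) :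
    wt (p :: l) = (p.2.2 : ℝ) + wt l := by simp [wt]
lemma eval_append (f : Bt A → ℝ) (l₁ l₂ : List (Bt A × Bool × ℚ)) :
    eval f (l₁ ++ l₂) = eval f l₁ + eval f l₂ := by simp [eval]
lemma wt_append (l₁ l₂ : List (Bt A × Bool × ℚ)) : wt (l₁ ++ l₂) = wt l₁ + wt l₂ := by simp [wt]
lemma eval_congr {f g : Bt A → ℝ} {l : List (Bt A × Bool × ℚ)}
    (h : ∀ p ∈ l, f p.1 = g p.1) : eval f l = eval g l := by
  induction l with
  | nil => rfl
  | cons p l ih =>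
    rw [eval_cons, eval_cons, h p (by simp), ih (fun q hq => h q (by simp [hq]))]

-- NEW PART 2
/-- the set of "bad" values for the witness at `x`, given earlier values `f`. -/
def Bad (r : Bt A → Bt A → Prop) (f : Bt A → ℝ) (x : Bt A) : Set ℝ :=
  {v | ∃ (l : List (Bt A × Bool × ℚ)) (γ : Bt A),
     (∀ p ∈ l, r p.1 x ∨ p.1 = x) ∧ (r γ x ∨ γ = x) ∧
     (γ = x ∨ ∃ p ∈ l, p.1 = x) ∧
     (∀ p ∈ l, 0 < p.2.2) ∧ wt l = 1 ∧ (¬ ∀ p ∈ l, p.1 = γ) ∧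
     Function.update f x v γ = eval (Function.update f x v) l}

def rho (x : Bt A) (l : List (Bt A × Bool × ℚ)) : ℝ :=
  (l.map (fun p => if p.1 = x then ((p.2.2 : ℚ) : ℝ) else 0)).sum

def sig (x : Bt A) (l : List (Bt A × Bool × ℚ)) : ℝ :=
  (l.map (fun p => if p.1 = x then 0 else ((p.2.2 : ℚ) : ℝ))).sum

def cst (f : Bt A → ℝ) (x : Bt A) (l : List (Bt A × Bool × ℚ)) : ℝ :=
  (l.map (fun p => if p.1 = x then (p.2.2 : ℝ) * (esign p.2.1 * x.1)
    else (p.2.2 : ℝ) * (f p.1 + esign p.2.1 * p.1.1))).sum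

lemma eval_update (f : Bt A → ℝ) (x : Bt A) (v : ℝ) (l : List (Bt A × Bool × ℚ)) :
    eval (Function.update f x v) l = v * rho x l + cst f x l := by
  induction l with
  | nil => simp [rho, cst]
  | cons p l ih =>
    rw [eval_cons, ih]
    simp only [rho, cst, List.map_cons, List.sum_cons, Function.update_apply]
    by_cases h : p.1 = x
    · rw [if_pos h, if_pos h, if_pos h]; subst h; ring
    · rw [if_neg h, if_neg h, if_neg h]; ring

lemma rho_add_sig (x : Bt A) (l : List (Bt A × Bool × ℚ)) : rho x l + sig x l = wt l := by
  induction l with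
  | nil => simp [rho, sig]
  | cons p l ih =>
    simp only [rho, sig, List.map_cons, List.sum_cons, wt_cons] at *
    by_cases h : p.1 = x <;> simp [h] <;> linarith

lemma rho_nonneg (x : Bt A) (l : List (Bt A × Bool × ℚ)) (hpos : ∀ p ∈ l, 0 < p.2.2) :
    0 ≤ rho x l := by
  induction l with
  | nil => simp [rho]
  | cons p l ih =>
    simp only [rho, List.map_cons, List.sum_cons]
    have h1 : 0 ≤ rho x l := ih (fun q hq => hpos q (by simp [hq]))
    have h2 : (0:ℝ) < (p.2.2 : ℝ) := by exact_mod_cast hpos p (by simp)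
    by_cases h : p.1 = x <;> simp [h, rho] at h1 ⊢ <;> linarith

lemma sig_nonneg (x : Bt A) (l : List (Bt A × Bool × ℚ)) (hpos : ∀ p ∈ l, 0 < p.2.2) :
    0 ≤ sig x l := by
  induction l with
  | nil => simp [sig]
  | cons p l ih =>
    simp only [sig, List.map_cons, List.sum_cons]
    have h1 : 0 ≤ sig x l := ih (fun q hq => hpos q (by simp [hq]))
    have h2 : (0:ℝ) < (p.2.2 : ℝ) := by exact_mod_cast hpos p (by simp)
    by_cases h : p.1 = x <;> simp [h, sig] at h1 ⊢ <;> linarith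

lemma rho_pos (x : Bt A) (l : List (Bt A × Bool × ℚ)) (hpos : ∀ p ∈ l, 0 < p.2.2)
    (hx : ∃ p ∈ l, p.1 = x) : 0 < rho x l := by
  induction l with
  | nil => simp at hx
  | cons p l ih =>
    have h2 : (0:ℝ) < (p.2.2 : ℝ) := by exact_mod_cast hpos p (by simp)
    have hnn : 0 ≤ rho x l := rho_nonneg x l (fun q hq => hpos q (by simp [hq]))
    simp only [rho, List.map_cons, List.sum_cons]
    rcases hx with ⟨q, hq, hqx⟩
    rcases List.mem_cons.1 hq with h | h
    · subst h; rw [if_pos hqx]; simp only [rho] at hnn; linarith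
    · have := ih (fun q hq => hpos q (by simp [hq])) ⟨q, h, hqx⟩
      simp only [rho] at this
      by_cases hp : p.1 = x <;> simp [hp] <;> linarith

lemma sig_pos (x : Bt A) (l : List (Bt A × Bool × ℚ)) (hpos : ∀ p ∈ l, 0 < p.2.2)
    (hx : ∃ p ∈ l, p.1 ≠ x) : 0 < sig x l := by
  induction l with
  | nil => simp at hx
  | cons p l ih =>
    have h2 : (0:ℝ) < (p.2.2 : ℝ) := by exact_mod_cast hpos p (by simp)
    have hnn : 0 ≤ sig x l := sig_nonneg x l (fun q hq => hpos q (by simp [hq]))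
    simp only [sig, List.map_cons, List.sum_cons]
    rcases hx with ⟨q, hq, hqx⟩
    rcases List.mem_cons.1 hq with h | h
    · subst h; rw [if_neg hqx]; simp only [sig] at hnn; linarith
    · have := ih (fun q hq => hpos q (by simp [hq])) ⟨q, h, hqx⟩
      simp only [sig] at this
      by_cases hp : p.1 = x <;> simp [hp] <;> linarith

section BadSmall

variable {A : Set ℝ}

lemma bad_small (r : Bt A → Bt A → Prop) (f : Bt A → ℝ) (x : Bt A)
    (hcard : #{y : Bt A // r y x} < continuum) : ∃ v, v ∉ Bad r f x := by
  classical
  by_contra hbad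
  push_neg at hbad
  set S := {y : Bt A // r y x ∨ y = x} with hS
  -- S is small
  have hSsmall : #S < continuum := by
    have hinj : Function.Injective (fun y : S =>
        if h : r y.1 x then (some ⟨y.1, h⟩ : Option {y : Bt A // r y x}) else none) := by
      intro y z hyz
      by_cases hy : r y.1 x <;> by_cases hz : r z.1 x <;>
        simp only [hy, hz, dif_pos, dif_neg, not_false_iff, Option.some.injEq, Subtype.mk.injEq] at hyz
      · exact Subtype.ext hyz
      · exact absurd hyz (by simp)
      · exact absurd hyz (by simp)
      · have h1 : y.1 = x := y.2.resolve_left hy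
        have h2 : z.1 = x := z.2.resolve_left hz
        exact Subtype.ext (h1.trans h2.symm)
    calc #S ≤ #(Option {y : Bt A // r y x}) := Cardinal.mk_le_of_injective hinj
      _ = #{y : Bt A // r y x} + 1 := Cardinal.mk_option
      _ < continuum := Cardinal.add_lt_of_lt Cardinal.aleph0_le_continuum hcard
            (lt_trans Cardinal.one_lt_aleph0 Cardinal.aleph0_lt_continuum)
  have main : ∃ sol : List (S × Bool × ℚ) × S → ℝ, Function.Surjective sol := by
    refine ⟨fun q =>
      if (q.2 : Bt A) = x then
        cst f x (q.1.map (fun p => ((p.1 : Bt A), p.2.1, p.2.2))) /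
          (1 - rho x (q.1.map (fun p => ((p.1 : Bt A), p.2.1, p.2.2))))
      else
        (f (q.2 : Bt A) - cst f x (q.1.map (fun p => ((p.1 : Bt A), p.2.1, p.2.2)))) /
          rho x (q.1.map (fun p => ((p.1 : Bt A), p.2.1, p.2.2))), ?_⟩
    intro v
    obtain ⟨l, γ, hbl, hbγ, hocc, hpos, hwt, hnall, heq⟩ := hbad v
    set L : List (S × Bool × ℚ) :=
      l.attach.map (fun p => (⟨p.1.1, hbl p.1 p.2⟩, p.1.2.1, p.1.2.2)) with hL
    have hfor : L.map (fun p => ((p.1 : Bt A), p.2.1, p.2.2)) = l := by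
      rw [hL, List.map_map]
      exact (List.attach_map_val (l := l) (f := id)).trans (List.map_id l)
    refine ⟨(L, ⟨γ, hbγ⟩), ?_⟩
    show (if γ = x then
        cst f x (L.map (fun p => ((p.1 : Bt A), p.2.1, p.2.2))) /
          (1 - rho x (L.map (fun p => ((p.1 : Bt A), p.2.1, p.2.2))))
      else
        (f γ - cst f x (L.map (fun p => ((p.1 : Bt A), p.2.1, p.2.2)))) /
          rho x (L.map (fun p => ((p.1 : Bt A), p.2.1, p.2.2)))) = v
    rw [hfor]
    have hkey : eval (Function.update f x v) l = v * rho x l + cst f x l := eval_update f x v l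
    by_cases hγx : γ = x
    · have hv : v = v * rho x l + cst f x l := by
        rw [← hkey, ← heq, hγx, Function.update_self]
      have hrholt : rho x l < 1 := by
        have hsig : 0 < sig x l := by
          refine sig_pos x l hpos ?_
          push_neg at hnall
          obtain ⟨p, hp, hpne⟩ := hnall
          exact ⟨p, hp, by rw [hγx] at hpne; exact hpne⟩
        have := rho_add_sig x l
        rw [hwt] at this
        linarith
      rw [if_pos hγx]
      have hne : 1 - rho x l ≠ 0 := by linarith
      field_simp
      linarith [hv]
    · have hv : f γ = v * rho x l + cst f x l := by
        rw [← hkey, ← heq, Function.update_apply, if_neg hγx]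
      have hrhopos : 0 < rho x l := by
        refine rho_pos x l hpos ?_
        rcases hocc with h | h
        · exact absurd h hγx
        · exact h
      rw [if_neg hγx]
      have hne : rho x l ≠ 0 := ne_of_gt hrhopos
      field_simp
      linarith [hv]
  obtain ⟨sol, hsurj⟩ := main
  -- cardinality contradiction
  have hlist : #(List (S × Bool × ℚ)) < continuum := by
    have h1 : #(S × Bool × ℚ) < continuum := by
      have h2 : #(S × Bool × ℚ) = #S * #(Bool × ℚ) := by
        rw [Cardinal.mk_prod]; simp
      rw [h2]
      exact Cardinal.mul_lt_of_lt Cardinal.aleph0_le_continuum hSsmall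
        (lt_of_le_of_lt Cardinal.mk_le_aleph0 Cardinal.aleph0_lt_continuum)
    exact lt_of_le_of_lt (Cardinal.mk_list_le_max _) (max_lt Cardinal.aleph0_lt_continuum h1)
  have hdom : #(List (S × Bool × ℚ) × S) < continuum := by
    rw [Cardinal.mk_prod]; simp only [Cardinal.lift_id]
    exact Cardinal.mul_lt_of_lt Cardinal.aleph0_le_continuum hlist hSsmall
  have hge : continuum ≤ #(List (S × Bool × ℚ) × S) := by
    rw [← Cardinal.mk_real]
    exact Cardinal.mk_le_of_surjective hsurj
  exact absurd hge (not_le.2 hdom)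

end BadSmall

section Wfn

variable {A : Set ℝ}

lemma Bad_congr {r : Bt A → Bt A → Prop} {f g : Bt A → ℝ} {x : Bt A}
    (hirr : ¬ r x x)
    (hfg : ∀ y, r y x → f y = g y) : Bad r f x = Bad r g x := by
  classical
  have key : ∀ (f g : Bt A → ℝ), (∀ y, r y x → f y = g y) → Bad r f x ⊆ Bad r g x := by
    intro f g hfg v hv
    obtain ⟨l, γ, hbl, hbγ, hocc, hpos, hwt, hnall, heq⟩ := hv
    refine ⟨l, γ, hbl, hbγ, hocc, hpos, hwt, hnall, ?_⟩
    have hupd : ∀ y, (r y x ∨ y = x) → Function.update f x v y = Function.update g x v y := by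
      intro y hy
      rcases eq_or_ne y x with h | h
      · subst h; simp
      · rw [Function.update_apply, Function.update_apply, if_neg h, if_neg h]
        exact hfg y (hy.resolve_right h)
    rw [← hupd γ hbγ, ← eval_congr (fun p hp => hupd p.1 (hbl p hp))]
    exact heq
  exact le_antisymm (key f g hfg) (key g f (fun y hy => (hfg y hy).symm))

open Classical in
noncomputable def wfn (r : Bt A → Bt A → Prop) (wf : WellFounded r)
    (hsmall : ∀ x : Bt A, #{y : Bt A // r y x} < continuum) : Bt A → ℝ :=
  wf.fix (fun x g =>
    (bad_small r (fun y => if h : r y x then g y h else 0) x (hsmall x)).choose)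

lemma wfn_spec (r : Bt A → Bt A → Prop) (wf : WellFounded r) (hirr : ∀ x, ¬ r x x)
    (hsmall : ∀ x : Bt A, #{y : Bt A // r y x} < continuum) :
    ∀ x, wfn r wf hsmall x ∉ Bad r (wfn r wf hsmall) x := by
  classical
  intro x
  have hfix : wfn r wf hsmall x =
      (bad_small r (fun y => if h : r y x then wfn r wf hsmall y else 0) x
        (hsmall x)).choose := by
    exact wf.fix_eq _ x
  have hspec := (bad_small r (fun y => if h : r y x then wfn r wf hsmall y else 0) x
      (hsmall x)).choose_spec
  rw [← hfix] at hspec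
  have hcongr : Bad r (fun y => if h : r y x then wfn r wf hsmall y else 0) x
      = Bad r (wfn r wf hsmall) x := by
    refine Bad_congr (hirr x) ?_
    intro y hy
    rw [dif_pos hy]
  rwa [hcongr] at hspec

lemma list_max (r : Bt A → Bt A → Prop) [IsWellOrder (Bt A) r] :
    ∀ l : List (Bt A), l ≠ [] → ∃ m ∈ l, ∀ z ∈ l, r z m ∨ z = m := by
  intro l
  induction l with
  | nil => intro h; exact absurd rfl h
  | cons a l ih =>
    intro _
    rcases eq_or_ne l [] with h | h
    · subst h
      exact ⟨a, by simp, by intro z hz; simp at hz; subst hz; exact Or.inr rfl⟩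
    · obtain ⟨m, hm, hmax⟩ := ih h
      rcases trichotomous_of r a m with hr | hr | hr
      · refine ⟨m, by simp [hm], ?_⟩
        intro z hz
        rcases List.mem_cons.1 hz with h' | h'
        · subst h'; exact Or.inl hr
        · exact hmax z h'
      · subst hr
        refine ⟨a, by simp, ?_⟩
        intro z hz
        rcases List.mem_cons.1 hz with h' | h'
        · subst h'; exact Or.inr rfl
        · exact hmax z h'
      · refine ⟨a, by simp, ?_⟩
        intro z hz
        rcases List.mem_cons.1 hz with h' | h'
        · subst h'; exact Or.inr rfl
        · rcases hmax z h' with h'' | h''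
          · exact Or.inl (_root_.trans h'' hr)
          · subst h''; exact Or.inl hr

lemma good (r : Bt A → Bt A → Prop) [IsWellOrder (Bt A) r]
    (hsmall : ∀ x : Bt A, #{y : Bt A // r y x} < continuum)
    (γ : Bt A) (l : List (Bt A × Bool × ℚ)) (hpos : ∀ p ∈ l, 0 < p.2.2)
    (hwt : wt l = 1)
    (heq : wfn r IsWellFounded.wf hsmall γ = eval (wfn r IsWellFounded.wf hsmall) l) :
    ∀ p ∈ l, p.1 = γ := by
  classical
  by_contra hne
  push_neg at hne
  set w := wfn r IsWellFounded.wf hsmall with hw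
  obtain ⟨m, hm, hmax⟩ := list_max r (γ :: l.map (fun p => p.1)) (by simp)
  have hbadm : w m ∈ Bad r w m := by
    refine ⟨l, γ, ?_, ?_, ?_, hpos, hwt, ?_, ?_⟩
    · intro p hp
      exact hmax p.1 (by simp only [List.mem_cons, List.mem_map]; right; exact ⟨p, hp, rfl⟩)
    · exact hmax γ (by simp)
    · rcases List.mem_cons.1 hm with h | h
      · exact Or.inl h.symm
      · obtain ⟨p, hp, hpm⟩ := List.mem_map.1 h
        exact Or.inr ⟨p, hp, hpm⟩
    · intro hall
      obtain ⟨p, hp, hpne⟩ := hne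
      exact hpne (hall p hp)
    · rw [Function.update_eq_self]
      exact heq
  exact wfn_spec r IsWellFounded.wf (fun x => irrefl_of r x) hsmall m hbadm

end Wfn

inductive Fcl (A : Set ℝ) (P : Set ℝ) : ℝ → Prop
  | base {x : ℝ} : x ∈ P → Fcl A P x
  | mid {x : ℝ} (a : ℝ) (ha : a ∈ A) (hpos : 0 < a)
      (h1 : Fcl A P (x + a)) (h2 : Fcl A P (x - a)) : Fcl A P x

def Pw {A : Set ℝ} (w : Bt A → ℝ) : Set ℝ :=
  {z | ∃ b : Bt A, z = w b + b.1 ∨ z = w b - b.1}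

section Rep

variable {A : Set ℝ}

def halve (l : List (Bt A × Bool × ℚ)) : List (Bt A × Bool × ℚ) :=
  l.map (fun p => (p.1, p.2.1, p.2.2 / 2))

lemma eval_halve (f : Bt A → ℝ) (l : List (Bt A × Bool × ℚ)) :
    eval f (halve l) = eval f l / 2 := by
  induction l with
  | nil => simp [halve]
  | cons p l ih =>
    simp only [halve, List.map_cons, eval_cons] at ih ⊢
    push_cast
    rw [ih]
    ring

lemma wt_halve (l : List (Bt A × Bool × ℚ)) : wt (halve l) = wt l / 2 := by
  induction l with
  | nil => simp [halve]
  | cons p l ih =>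
    simp only [halve, List.map_cons, wt_cons] at ih ⊢
    push_cast
    rw [ih]
    ring

lemma mem_halve {l : List (Bt A × Bool × ℚ)} {p : Bt A × Bool × ℚ} (hp : p ∈ halve l) :
    ∃ q ∈ l, p = (q.1, q.2.1, q.2.2 / 2) := by
  obtain ⟨q, hq, hqp⟩ := List.mem_map.1 hp
  exact ⟨q, hq, hqp.symm⟩

lemma mem_halve_of_mem {l : List (Bt A × Bool × ℚ)} {q : Bt A × Bool × ℚ} (hq : q ∈ l) :
    (q.1, q.2.1, q.2.2 / 2) ∈ halve l := List.mem_map_of_mem hq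

lemma rep (w : Bt A → ℝ) {x : ℝ} (h : Fcl A (Pw w) x) :
    ∃ l : List (Bt A × Bool × ℚ), (∀ p ∈ l, 0 < p.2.2) ∧ wt l = 1 ∧ x = eval w l ∧
      ((∃ p ∈ l, ∃ p' ∈ l, p.1 ≠ p'.1) ∨ ∃ b e, l = [(b, e, 1)]) := by
  induction h with
  | base hx =>
    obtain ⟨b, hb | hb⟩ := hx
    · refine ⟨[(b, true, 1)], by simp, by simp, ?_, Or.inr ⟨b, true, rfl⟩⟩
      simp [eval, esign, hb]
    · refine ⟨[(b, false, 1)], by simp, by simp, ?_, Or.inr ⟨b, false, rfl⟩⟩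
      simp only [eval, esign, List.map_cons, List.map_nil, List.sum_cons, List.sum_nil]
      rw [hb]
      push_cast
      ring
  | mid a ha hapos h1 h2 ih1 ih2 =>
    obtain ⟨l₁, hpos₁, hwt₁, hev₁, hd₁⟩ := ih1
    obtain ⟨l₂, hpos₂, hwt₂, hev₂, hd₂⟩ := ih2
    refine ⟨halve l₁ ++ halve l₂, ?_, ?_, ?_, ?_⟩
    · intro p hp
      rcases List.mem_append.1 hp with h' | h' <;>
      · obtain ⟨q, hq, hqe⟩ := mem_halve h'
        subst hqe
        have := (by first | exact hpos₁ q hq | exact hpos₂ q hq : 0 < q.2.2)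
        simp only []
        positivity
    · rw [wt_append, wt_halve, wt_halve, hwt₁, hwt₂]; norm_num
    · rw [eval_append, eval_halve, eval_halve, ← hev₁, ← hev₂]; ring
    · -- distinctness analysis
      rcases hd₁ with ⟨p, hp, p', hp', hne⟩ | ⟨b, e, hl₁⟩
      · left
        exact ⟨(p.1, p.2.1, p.2.2 / 2), List.mem_append_left _ (mem_halve_of_mem hp),
          (p'.1, p'.2.1, p'.2.2 / 2), List.mem_append_left _ (mem_halve_of_mem hp'), hne⟩
      rcases hd₂ with ⟨p, hp, p', hp', hne⟩ | ⟨b', e', hl₂⟩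
      · left
        exact ⟨(p.1, p.2.1, p.2.2 / 2), List.mem_append_right _ (mem_halve_of_mem hp),
          (p'.1, p'.2.1, p'.2.2 / 2), List.mem_append_right _ (mem_halve_of_mem hp'), hne⟩
      -- both singletons
      rcases eq_or_ne b b' with hbb | hbb
      · -- impossible: would force a = b ∈ A
        exfalso
        subst hbb
        subst hl₁; subst hl₂
        simp only [eval, List.map_cons, List.map_nil, List.sum_cons, List.sum_nil] at hev₁ hev₂
        have h2a : 2 * a = (esign e - esign e') * b.1 := by
          have := hev₁
          have := hev₂
          push_cast at hev₁ hev₂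
          nlinarith [hev₁, hev₂]
        cases e <;> cases e' <;> simp [esign] at h2a
        · linarith
        · -- esign false - esign true = -2 : 2a = -2b
          have hb := b.2.1
          nlinarith
        · -- 2a = 2b : a = b ∈ A contradicts b ∉ A
          have : a = b.1 := by linarith
          exact b.2.2 (this ▸ ha)
        · linarith
      · left
        refine ⟨(b, e, (1:ℚ)/2), ?_, (b', e', (1:ℚ)/2), ?_, hbb⟩
        · subst hl₁
          exact List.mem_append_left _ (by simp [halve])
        · subst hl₂
          exact List.mem_append_right _ (by simp [halve])

end Rep

section Main

variable {A : Set ℝ}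

lemma witness_not_mem (r : Bt A → Bt A → Prop) [IsWellOrder (Bt A) r]
    (hsmall : ∀ x : Bt A, #{y : Bt A // r y x} < continuum) (γ : Bt A) :
    ¬ Fcl A (Pw (wfn r IsWellFounded.wf hsmall)) (wfn r IsWellFounded.wf hsmall γ) := by
  intro hF
  set w := wfn r IsWellFounded.wf hsmall with hw
  obtain ⟨l, hpos, hwt, hev, hd⟩ := rep w hF
  rcases hd with ⟨p, hp, p', hp', hne⟩ | ⟨b, e, hl⟩
  · have h1 := good r hsmall γ l hpos hwt hev p hp
    have h2 := good r hsmall γ l hpos hwt hev p' hp'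
    exact hne (h1.trans h2.symm)
  · have h1 := good r hsmall γ l hpos hwt hev (b, e, 1) (by rw [hl]; simp)
    simp only at h1
    subst h1
    rw [hl] at hev
    simp only [eval, List.map_cons, List.map_nil, List.sum_cons, List.sum_nil] at hev
    push_cast at hev
    have : esign e * b.1 = 0 := by linarith
    rcases mul_eq_zero.1 this with h | h
    · exact esign_ne_zero e h
    · exact ne_of_gt b.2.1 h

end Main

end
end CDAux

open CDAux in
theorem stmt8 (A : Set ℝ) (hA : A ⊆ Ici 0) (h0 : (0 : ℝ) ∈ A) :
    ∃ X : Set ℝ, centerOfDistances X = A := by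
  classical
  obtain ⟨r, wo, hord⟩ := Cardinal.ord_eq (Bt A)
  haveI := wo
  have hsmall : ∀ x : Bt A, #{y : Bt A // r y x} < Cardinal.continuum := by
    intro x
    have h1 : Ordinal.typein r x < Ordinal.type r := Ordinal.typein_lt_type r x
    rw [← hord] at h1
    have h2 := Cardinal.lt_ord.1 h1
    change #{y : Bt A // r y x} < _ at h2
    exact h2.trans_le ((Cardinal.mk_subtype_le _).trans_eq Cardinal.mk_real)
  set w := wfn r IsWellFounded.wf hsmall with hw
  set F : Set ℝ := {z | Fcl A (Pw w) z} with hF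
  refine ⟨Fᶜ, ?_⟩
  ext s
  constructor
  · rintro ⟨hs0, hs⟩
    by_contra hsA
    have hspos : 0 < s := lt_of_le_of_ne hs0 (fun h => hsA (h ▸ h0))
    set γ : Bt A := ⟨s, hspos, hsA⟩ with hγ
    have hxX : w γ ∈ Fᶜ := witness_not_mem r hsmall γ
    obtain ⟨y, hy, hxy⟩ := hs (w γ) hxX
    rcases abs_eq hs0 |>.1 hxy with h | h
    · -- w γ - y = s, so y = w γ - s
      have hyv : y = w γ - γ.1 := by simp only [hγ]; linarith
      exact hy (Fcl.base ⟨γ, Or.inr hyv⟩)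
    · have hyv : y = w γ + γ.1 := by simp only [hγ]; linarith
      exact hy (Fcl.base ⟨γ, Or.inl hyv⟩)
  · intro ha
    refine ⟨hA ha, ?_⟩
    intro x hx
    rcases eq_or_lt_of_le (show (0:ℝ) ≤ s from hA ha) with h0a | hapos
    · exact ⟨x, hx, by rw [← h0a]; simp⟩
    have hnot : ¬ (Fcl A (Pw w) (x + s) ∧ Fcl A (Pw w) (x - s)) := by
      rintro ⟨h1, h2⟩
      exact hx (Fcl.mid s ha hapos h1 h2)
    rcases not_and_or.1 hnot with h | h
    · refine ⟨x + s, h, ?_⟩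
      have hxs : x - (x + s) = -s := by ring
      rw [hxs, abs_neg, abs_of_pos hapos]
    · refine ⟨x - s, h, ?_⟩
      have hxs : x - (x - s) = s := by ring
      rw [hxs, abs_of_pos hapos]
end

section
/- There exists a Bernstein set X ⊆ ℝ such that S(X) = [0,∞). -/
open Set

/-- A Bernstein set: it and its complement meet every uncountable closed subset of `ℝ`. -/
def IsBernstein (X : Set ℝ) : Prop :=
  ∀ F : Set ℝ, IsClosed F → ¬ F.Countable → (X ∩ F).Nonempty ∧ (Xᶜ ∩ F).Nonempty

namespace Stmt12Aux

open Cardinal Submodule Classical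

noncomputable section

/-- The type of uncountable closed subsets of `ℝ`. -/
abbrev UCl := {F : Set ℝ // IsClosed F ∧ ¬ F.Countable}

lemma continuum_le_mk_ucl (F : UCl) : 𝔠 ≤ #F.1 := by
  obtain ⟨f, hf, -, hinj⟩ := F.2.1.exists_nat_bool_injection_of_not_countable F.2.2
  have h1 : #(ℕ → Bool) ≤ #F.1 :=
    mk_le_of_injective (f := fun x => (⟨f x, hf (mem_range_self x)⟩ : F.1))
      (fun a b h => hinj (congrArg Subtype.val h))
  have h2 : #(ℕ → Bool) = 𝔠 := by
    rw [mk_arrow]; simp [two_power_aleph0]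
  rw [← h2]; exact h1

lemma mk_ucl_le : #UCl ≤ 𝔠 := by
  have key : Function.Injective
      (fun F : UCl => fun q : ℚ => Metric.infDist (q : ℝ) F.1) := by
    intro F G h
    have hne_F : F.1.Nonempty := by
      rcases F.1.eq_empty_or_nonempty with he | hne
      · exact absurd (he ▸ countable_empty) F.2.2
      · exact hne
    have hne_G : G.1.Nonempty := by
      rcases G.1.eq_empty_or_nonempty with he | hne
      · exact absurd (he ▸ countable_empty) G.2.2
      · exact hne
    have hFG : (fun x : ℝ => Metric.infDist x F.1) = fun x => Metric.infDist x G.1 := by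
      apply Continuous.ext_on Rat.denseRange_cast (Metric.continuous_infDist_pt _)
        (Metric.continuous_infDist_pt _)
      rintro x ⟨q, rfl⟩
      exact congrFun h q
    apply Subtype.ext
    ext x
    rw [F.2.1.mem_iff_infDist_zero hne_F, G.2.1.mem_iff_infDist_zero hne_G,
      show Metric.infDist x F.1 = Metric.infDist x G.1 from congrFun hFG x]
  calc #UCl ≤ #(ℚ → ℝ) := mk_le_of_injective key
    _ = 𝔠 := by rw [mk_arrow]; simp [mk_real, continuum_power_aleph0]

/-- An embedding of the uncountable closed sets into the canonical well-order of
cardinality continuum. -/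
def g : UCl ↪ (Cardinal.continuum.ord).ToType := by
  have h : #UCl ≤ #(Cardinal.continuum.ord).ToType := by
    rw [mk_toType, card_ord]; exact mk_ucl_le
  exact (Cardinal.le_def _ _).1 h |>.some

/-- The pulled-back well-order on `UCl`. -/
def r (F G : UCl) : Prop := g F < g G

lemma wf : WellFounded r := InvImage.wf g (IsWellFounded.wf)

lemma mk_lt_of_r (F : UCl) : #{G : UCl // r G F} < 𝔠 := by
  have h : #{G : UCl // r G F} ≤ #(Iio (g F)) :=
    mk_le_of_injective (f := fun G => (⟨g G.1, G.2⟩ : Iio (g F)))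
      (fun a b h => Subtype.ext (g.injective (congrArg Subtype.val h)))
  exact h.trans_lt (mk_Iio_ord_toType (g F))

lemma mk_span_lt {S : Set ℝ} (hS : #S < 𝔠) : #(span ℚ S : Set ℝ) < 𝔠 := by
  have h1 : #(span ℚ S : Set ℝ) ≤ #(S →₀ ℚ) := by
    rw [Finsupp.span_eq_range_linearCombination]
    exact mk_range_le
  rcases isEmpty_or_nonempty S with hS0 | hS1
  · have : #(S →₀ ℚ) ≤ ℵ₀ := by
      haveI : Subsingleton (S →₀ ℚ) := ⟨fun a b => Finsupp.ext (fun x => (IsEmpty.false x).elim)⟩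
      exact mk_le_aleph0
    exact (h1.trans this).trans_lt aleph0_lt_continuum
  · have h2 : #(S →₀ ℚ) = max #S #ℚ := mk_finsupp_of_infinite' S ℚ
    rw [show #ℚ = ℵ₀ from mk_denumerable ℚ] at h2
    exact h1.trans_lt (h2 ▸ max_lt hS aleph0_lt_continuum)

lemma exists_pick (F : UCl) {S : Set ℝ} (hS : #S < 𝔠) :
    ∃ p, p ∈ F.1 ∧ p ∉ span ℚ S := by
  by_contra h
  push_neg at h
  have hsub : F.1 ⊆ (span ℚ S : Set ℝ) := fun x hx => h x hx
  exact absurd ((continuum_le_mk_ucl F).trans (mk_le_mk_of_subset hsub))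
    (not_le.2 (mk_span_lt hS))

/-- The set of reals produced at earlier stages. -/
def prevSet (F : UCl) (IH : ∀ G, r G F → ℝ × ℝ) : Set ℝ :=
  {x | ∃ G, ∃ h : r G F, x = (IH G h).1 ∨ x = (IH G h).2}

lemma prevSet_lt (F : UCl) (IH : ∀ G, r G F → ℝ × ℝ) : #(prevSet F IH) < 𝔠 := by
  have hsub : prevSet F IH ⊆ range (fun z : {G : UCl // r G F} × Bool =>
      if z.2 then (IH z.1.1 z.1.2).1 else (IH z.1.1 z.1.2).2) := by
    rintro x ⟨G, h, hx | hx⟩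
    · exact ⟨(⟨G, h⟩, true), hx.symm⟩
    · exact ⟨(⟨G, h⟩, false), hx.symm⟩
  refine ((mk_le_mk_of_subset hsub).trans mk_range_le).trans_lt ?_
  have h2 : #({G : UCl // r G F} × Bool) = #{G : UCl // r G F} * 2 := by simp
  rw [h2]
  exact mul_lt_of_lt aleph0_le_continuum (mk_lt_of_r F)
    ((nat_lt_aleph0 2).trans_le aleph0_le_continuum)

def pick1 (F : UCl) (IH : ∀ G, r G F → ℝ × ℝ) : ℝ :=
  (exists_pick F (prevSet_lt F IH)).choose

lemma pick1_spec (F : UCl) (IH : ∀ G, r G F → ℝ × ℝ) :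
    pick1 F IH ∈ F.1 ∧ pick1 F IH ∉ span ℚ (prevSet F IH) :=
  (exists_pick F (prevSet_lt F IH)).choose_spec

lemma insert_lt (F : UCl) (IH : ∀ G, r G F → ℝ × ℝ) :
    #(insert (pick1 F IH) (prevSet F IH) : Set ℝ) < 𝔠 := by
  refine (mk_insert_le).trans_lt ?_
  exact add_lt_of_lt aleph0_le_continuum (prevSet_lt F IH)
    (one_lt_aleph0.trans_le aleph0_le_continuum)

def pick2 (F : UCl) (IH : ∀ G, r G F → ℝ × ℝ) : ℝ :=
  (exists_pick F (insert_lt F IH)).choose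

lemma pick2_spec (F : UCl) (IH : ∀ G, r G F → ℝ × ℝ) :
    pick2 F IH ∈ F.1 ∧ pick2 F IH ∉ span ℚ (insert (pick1 F IH) (prevSet F IH)) :=
  (exists_pick F (insert_lt F IH)).choose_spec

def step (F : UCl) (IH : ∀ G, r G F → ℝ × ℝ) : ℝ × ℝ :=
  (pick1 F IH, pick2 F IH)

/-- The transfinite construction: to each uncountable closed set we associate a pair of
points in it. -/
def f : UCl → ℝ × ℝ := wf.fix step

lemma f_eq (F : UCl) : f F = step F (fun G _ => f G) := wf.fix_eq step F

/-- Points produced strictly before stage `F`. -/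
def prev (F : UCl) : Set ℝ := prevSet F (fun G _ => f G)

lemma hp_mem (F : UCl) : (f F).1 ∈ F.1 := by
  rw [f_eq]; exact (pick1_spec F _).1

lemma hp_span (F : UCl) : (f F).1 ∉ span ℚ (prev F) := by
  rw [f_eq]; exact (pick1_spec F _).2

lemma hq_mem (F : UCl) : (f F).2 ∈ F.1 := by
  rw [f_eq]; exact (pick2_spec F _).1

lemma hq_span (F : UCl) : (f F).2 ∉ span ℚ (insert ((f F).1) (prev F)) := by
  have h := (pick2_spec F (fun G _ => f G)).2
  rw [f_eq]
  exact h

/-- The set of first coordinates. -/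
def P : Set ℝ := range (fun F => (f F).1)

/-- The subspace spanned by them. -/
def M : Submodule ℚ ℝ := span ℚ P

lemma key_aux (T : Finset UCl) : ∀ F : UCl, (f F).2 ∉ span ℚ ((fun G => (f G).1) '' ↑T) := by
  induction T using Finset.strongInduction with
  | _ T IH =>
    intro F hmem
    by_cases hall : ∀ G ∈ T, G = F ∨ r G F
    · apply hq_span F
      refine span_mono ?_ hmem
      rintro x ⟨G, hG, rfl⟩
      rcases hall G (Finset.mem_coe.1 hG) with rfl | hr
      · exact mem_insert _ _
      · exact Set.mem_insert_iff.2 (Or.inr ⟨G, hr, Or.inl rfl⟩)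
    · push_neg at hall
      obtain ⟨G₁, hG₁T, hG₁⟩ := hall
      have hTne : T.Nonempty := ⟨G₁, hG₁T⟩
      obtain ⟨G₀, hG₀T, hmax⟩ := Finset.exists_max_image T (fun G => g G) hTne
      have hFG₀ : r F G₀ := by
        have h1 : g F < g G₁ := by
          rcases lt_trichotomy (g F) (g G₁) with h | h | h
          · exact h
          · exact absurd (g.injective h.symm) hG₁.1
          · exact absurd h hG₁.2
        exact h1.trans_le (hmax G₁ hG₁T)
      have hsubst : ((fun G => (f G).1) '' ↑T : Set ℝ) ⊆
          insert ((f G₀).1) ((fun G => (f G).1) '' ↑(T.erase G₀)) := by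
        rintro x ⟨G, hG, rfl⟩
        by_cases hGG₀ : G = G₀
        · exact hGG₀ ▸ mem_insert _ _
        · exact Set.mem_insert_iff.2
            (Or.inr ⟨G, Finset.mem_coe.2 (Finset.mem_erase.2 ⟨hGG₀, Finset.mem_coe.1 hG⟩), rfl⟩)
      have hmem' : (f F).2 ∈ span ℚ (insert ((f G₀).1) ((fun G => (f G).1) '' ↑(T.erase G₀))) :=
        span_mono hsubst hmem
      have hnotmem : (f F).2 ∉ span ℚ ((fun G => (f G).1) '' ↑(T.erase G₀)) :=
        IH (T.erase G₀) (Finset.erase_ssubset hG₀T) F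
      have hexch := mem_span_insert_exchange hmem' hnotmem
      apply hp_span G₀
      refine span_mono ?_ hexch
      rintro x (rfl | ⟨G, hG, rfl⟩)
      · exact ⟨F, hFG₀, Or.inr rfl⟩
      · have hGe := Finset.mem_erase.1 (Finset.mem_coe.1 hG)
        have hr : r G G₀ := by
          have h1 : g G ≤ g G₀ := hmax G hGe.2
          rcases h1.lt_or_eq with h | h
          · exact h
          · exact absurd (g.injective h) hGe.1
        exact ⟨G, hr, Or.inl rfl⟩

lemma key (F : UCl) : (f F).2 ∉ M := by
  intro hmem
  obtain ⟨t, ht, hsp⟩ := Submodule.mem_span_finite_of_mem_span hmem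
  have hch : ∀ x ∈ t, ∃ G : UCl, (f G).1 = x := fun x hx => ht hx
  choose gf hgf using hch
  set T : Finset UCl := t.attach.image (fun x => gf x.1 x.2) with hT
  have hsub : (t : Set ℝ) ⊆ (fun G => (f G).1) '' ↑T := by
    intro x hx
    refine ⟨gf x hx, Finset.mem_coe.2 ?_, hgf x hx⟩
    exact Finset.mem_image.2 ⟨⟨x, hx⟩, Finset.mem_attach _ _, rfl⟩
  exact key_aux T F (span_mono hsub hsp)

end

end Stmt12Aux

theorem stmt12 : ∃ X : Set ℝ, IsBernstein X ∧ centerOfDistances X = Ici 0 := by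
  refine ⟨(Stmt12Aux.M : Set ℝ)ᶜ, ?_, ?_⟩
  · intro F hF hcnt
    set iF : Stmt12Aux.UCl := ⟨F, hF, hcnt⟩ with hiF
    constructor
    · exact ⟨(Stmt12Aux.f iF).2, Stmt12Aux.key iF, Stmt12Aux.hq_mem iF⟩
    · refine ⟨(Stmt12Aux.f iF).1, ?_, Stmt12Aux.hp_mem iF⟩
      rw [compl_compl]
      exact Submodule.subset_span ⟨iF, rfl⟩
  · ext a
    simp only [centerOfDistances, mem_setOf_eq, mem_Ici]
    constructor
    · exact fun h => h.1
    · intro ha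
      refine ⟨ha, fun x hx => ?_⟩
      rw [mem_compl_iff, SetLike.mem_coe] at hx
      by_cases hxa : x + a ∈ Stmt12Aux.M
      · refine ⟨x - a, ?_, by rw [show x - (x - a) = a by ring, abs_of_nonneg ha]⟩
        rw [mem_compl_iff, SetLike.mem_coe]
        intro hmem
        apply hx
        have hsum : ((1:ℚ)/2) • (x + a) + ((1:ℚ)/2) • (x - a) ∈ Stmt12Aux.M :=
          Stmt12Aux.M.add_mem (Stmt12Aux.M.smul_mem _ hxa) (Stmt12Aux.M.smul_mem _ hmem)
        have heq : ((1:ℚ)/2) • (x + a) + ((1:ℚ)/2) • (x - a) = x := by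
          rw [Rat.smul_def, Rat.smul_def]; push_cast; ring
        rwa [heq] at hsum
      · refine ⟨x + a, ?_, by rw [show x - (x + a) = -a by ring, abs_neg, abs_of_nonneg ha]⟩
        rw [mem_compl_iff, SetLike.mem_coe]
        exact hxa
end

section
/- For every set A ⊆ [0,∞) with 0 ∈ A, there exists a Bernstein set X ⊆ ℝ such that S(X) = A. -/
open Set

open Set Cardinal Submodule

namespace Stmt13

inductive Bad (A D : Set ℝ) : ℝ → Prop
  | base {x : ℝ} : x ∈ D → Bad A D x
  | step {x b : ℝ} : b ∈ A → Bad A D (x + b) → Bad A D (x - b) → Bad A D x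

theorem Bad.mono {A D D' : Set ℝ} (h : D ⊆ D') {x : ℝ} (hx : Bad A D x) : Bad A D' x := by
  induction hx with
  | base hm => exact .base (h hm)
  | step hb _ _ ih1 ih2 => exact .step hb ih1 ih2

theorem Bad.mem_span {A D : Set ℝ} {x : ℝ} (hx : Bad A D x) : x ∈ span ℚ D := by
  induction hx with
  | base hm => exact subset_span hm
  | step hb h1 h2 ih1 ih2 =>
    rename_i z b
    have : z = (1/2 : ℚ) • (z + b) + (1/2 : ℚ) • (z - b) := by
      rw [Rat.smul_def, Rat.smul_def]; push_cast; ring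
    rw [this]
    exact add_mem (smul_mem _ _ ih1) (smul_mem _ _ ih2)

/-- Cardinality of a `ℚ`-span. -/
theorem mk_span_le (s : Set ℝ) : #(span ℚ s : Set ℝ) ≤ max #s ℵ₀ := by
  classical
  set t : Set ℝ := s ∪ Set.range ((↑) : ℕ → ℝ) with ht
  have hinf : t.Infinite := Set.Infinite.mono subset_union_right
    (Set.infinite_range_of_injective Nat.cast_injective)
  haveI : Infinite ↥t := hinf.to_subtype
  have h1 : (span ℚ s : Set ℝ) ⊆ (span ℚ t : Set ℝ) := span_mono subset_union_left
  have h2 : #(span ℚ t : Set ℝ) ≤ #(↥t →₀ ℚ) := by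
    rw [Finsupp.span_eq_range_linearCombination]
    exact mk_le_of_surjective (Set.rangeFactorization_surjective (f := _)) |>.trans_eq rfl |>.trans le_rfl
  have h3 : #(↥t →₀ ℚ) = max #↥t ℵ₀ := by
    rw [mk_finsupp_lift_of_infinite, Cardinal.mkRat]
    simp
  have h4 : #↥t ≤ max #s ℵ₀ := by
    calc #↥t ≤ #↥s + #↥(Set.range ((↑) : ℕ → ℝ)) := mk_union_le _ _
      _ ≤ max #↥s ℵ₀ + max #↥s ℵ₀ := by
          gcongr
          · exact le_max_left _ _
          · exact le_trans mk_range_le (by simp)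
      _ ≤ max #↥s ℵ₀ := by
          rw [Cardinal.add_eq_max (le_max_right _ _)]; simp
  calc #(span ℚ s : Set ℝ) ≤ #(span ℚ t : Set ℝ) := Cardinal.mk_le_mk_of_subset h1
    _ ≤ max #↥t ℵ₀ := h2.trans_eq h3 |>.trans (by exact le_rfl)
    _ ≤ max #s ℵ₀ := by
        rcases le_or_gt #↥t ℵ₀ with h | h
        · exact max_le (h.trans (le_max_right _ _)) (le_max_right _ _)
        · exact max_le h4 (le_max_right _ _)



/-- mixed representation -/
def Mix (D : Set ℝ) (e₁ e₂ : ℝ) (x : ℝ) : Prop :=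
  ∃ u ∈ span ℚ D, ∃ q₁ q₂ : ℚ, 0 ≤ q₁ ∧ 0 ≤ q₂ ∧ 0 < q₁ + q₂ ∧ q₁ + q₂ < 1 ∧
    x = u + (q₁ : ℝ) * e₁ + (q₂ : ℝ) * e₂

theorem bad_union_pair {A D : Set ℝ} {e₁ e₂ : ℝ}
    (hthin : ∀ t b, b ∈ A → t + b ∈ ({e₁, e₂} : Set ℝ) → t - b ∈ ({e₁, e₂} : Set ℝ) →
      t ∈ ({e₁, e₂} : Set ℝ))
    {x : ℝ} (hx : Bad A (D ∪ {e₁, e₂}) x) :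
    Bad A D x ∨ x ∈ ({e₁, e₂} : Set ℝ) ∨ Mix D e₁ e₂ x := by
  induction hx with
  | base hm =>
    rcases hm with hm | hm
    · exact Or.inl (.base hm)
    · exact Or.inr (Or.inl hm)
  | step hb h1 h2 ih1 ih2 =>
    rename_i z b
    by_cases hbb : Bad A D (z + b) ∧ Bad A D (z - b)
    · exact Or.inl (.step hb hbb.1 hbb.2)
    by_cases hee : (z + b) ∈ ({e₁, e₂} : Set ℝ) ∧ (z - b) ∈ ({e₁, e₂} : Set ℝ)
    · exact Or.inr (Or.inl (hthin z b hb hee.1 hee.2))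
    -- extract representations
    have toRep : ∀ c, Bad A D c ∨ c ∈ ({e₁, e₂} : Set ℝ) ∨ Mix D e₁ e₂ c →
        ∃ u ∈ span ℚ D, ∃ q₁ q₂ : ℚ, 0 ≤ q₁ ∧ 0 ≤ q₂ ∧ q₁ + q₂ ≤ 1 ∧
          c = u + (q₁ : ℝ) * e₁ + (q₂ : ℝ) * e₂ ∧
          (¬ Bad A D c → 0 < q₁ + q₂) ∧ (c ∉ ({e₁, e₂} : Set ℝ) → q₁ + q₂ < 1) := by
      rintro c (hc | hc | hc)
      · exact ⟨c, hc.mem_span, 0, 0, le_refl _, le_refl _, by norm_num, by push_cast; ring,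
          fun h => absurd hc h, fun _ => by norm_num⟩
      · simp only [Set.mem_insert_iff, Set.mem_singleton_iff] at hc
        rcases hc with hc | hc
        · exact ⟨0, zero_mem _, 1, 0, by norm_num, by norm_num, by norm_num,
            by push_cast; simp [hc], fun _ => by norm_num,
            fun h => absurd (by simp [hc] : c ∈ ({e₁, e₂} : Set ℝ)) h⟩
        · refine ⟨0, zero_mem _, 0, 1, by norm_num, by norm_num, by norm_num,
            by push_cast; simp [hc], fun _ => by norm_num,
            fun h => absurd (by simp [hc] : c ∈ ({e₁, e₂} : Set ℝ)) h⟩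
      · obtain ⟨u, hu, q₁, q₂, h₁, h₂, hpos, hlt, heq⟩ := hc
        exact ⟨u, hu, q₁, q₂, h₁, h₂, hlt.le, heq, fun _ => hpos, fun _ => hlt⟩
    obtain ⟨u₁, hu₁, a₁, a₂, ha₁, ha₂, hale, heq₁, hA1, hA2⟩ := toRep _ ih1
    obtain ⟨u₂, hu₂, b₁, b₂, hb₁, hb₂, hble, heq₂, hB1, hB2⟩ := toRep _ ih2
    refine Or.inr (Or.inr ?_)
    refine ⟨(1/2 : ℚ) • (u₁ + u₂), smul_mem _ _ (add_mem hu₁ hu₂),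
      (a₁ + b₁) / 2, (a₂ + b₂) / 2, by positivity, by positivity, ?_, ?_, ?_⟩
    · -- 0 < sum
      rcases not_and_or.mp hbb with h | h
      · have := hA1 h; linarith
      · have := hB1 h; linarith
    · rcases not_and_or.mp hee with h | h
      · have := hA2 h; linarith
      · have := hB2 h; linarith
    · rw [Rat.smul_def]
      push_cast
      linarith [heq₁, heq₂]

noncomputable section

/-- index type: a well order of length `continuum.ord` -/
abbrev Idx : Type := (Cardinal.continuum).ord.ToType

noncomputable example : LinearOrder Idx := inferInstance

lemma wfIdx : WellFounded ((· < ·) : Idx → Idx → Prop) := wellFounded_lt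

lemma mk_Idx : #Idx = Cardinal.continuum := Cardinal.mk_ord_toType _

lemma mk_Iio_idx (i : Idx) : #{j : Idx // j < i} < Cardinal.continuum := by
  have h := Cardinal.card_typein_toType_lt Cardinal.continuum i
  exact lt_of_eq_of_lt (@Ordinal.card_typein Idx ((· < ·) : Idx → Idx → Prop) isWellOrder_lt i) h

/-- task type -/
abbrev TaskT : Type := {F : Set ℝ // IsClosed F} ⊕ ℝ

instance : Nonempty TaskT := ⟨Sum.inr 0⟩

lemma mk_closeds : #{F : Set ℝ // IsClosed F} ≤ Cardinal.continuum := by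
  have hinj : Function.Injective
      (fun F : {F : Set ℝ // IsClosed F} => {p : ℚ × ℚ | Ioo (p.1 : ℝ) p.2 ∩ F.1 = ∅}) := by
    have key : ∀ F G : {F : Set ℝ // IsClosed F},
        {p : ℚ × ℚ | Ioo (p.1 : ℝ) p.2 ∩ F.1 = ∅} = {p : ℚ × ℚ | Ioo (p.1 : ℝ) p.2 ∩ G.1 = ∅} →
        F.1 ⊆ G.1 := by
      rintro ⟨F, hF⟩ ⟨G, hG⟩ h x hx
      by_contra hxG
      have : Gᶜ ∈ nhds x := hG.isOpen_compl.mem_nhds hxG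
      obtain ⟨ε, hε, hball⟩ := Metric.mem_nhds_iff.mp this
      obtain ⟨p, hp1, hp2⟩ := exists_rat_btwn (show x - ε < x by linarith)
      obtain ⟨q, hq1, hq2⟩ := exists_rat_btwn (show x < x + ε by linarith)
      have hpq : (p, q) ∈ {p : ℚ × ℚ | Ioo (p.1 : ℝ) p.2 ∩ G = ∅} := by
        simp only [mem_setOf_eq]
        ext y
        simp only [mem_inter_iff, mem_Ioo, mem_empty_iff_false, iff_false, not_and]
        intro hy hyG
        have : y ∈ Metric.ball x ε := by
          simp only [Metric.mem_ball, Real.dist_eq, abs_lt]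
          constructor <;> linarith [hy.1, hy.2]
        exact (hball this) hyG
      rw [← h] at hpq
      have : x ∈ Ioo (p : ℝ) q ∩ F := ⟨⟨hp2, hq1⟩, hx⟩
      rw [hpq] at this
      exact this
    intro F G h
    exact Subtype.ext (subset_antisymm (key F G h) (key G F h.symm))
  calc #{F : Set ℝ // IsClosed F} ≤ #(Set (ℚ × ℚ)) := mk_le_of_injective hinj
    _ = 2 ^ (ℵ₀ : Cardinal) := by rw [mk_set]; norm_num [mk_denumerable]
    _ = Cardinal.continuum := by rw [Cardinal.two_power_aleph0]

lemma mk_TaskT : #TaskT ≤ Cardinal.continuum := by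
  have : #TaskT = #{F : Set ℝ // IsClosed F} + #ℝ := by
    simp [TaskT, mk_sum]
  rw [this, Cardinal.mk_real]
  exact (add_le_add mk_closeds le_rfl).trans (by simp)

/-- a surjective enumeration of tasks -/
def tauEmb : TaskT ↪ Idx :=
  Classical.choice ((Cardinal.le_def _ _).mp (mk_TaskT.trans_eq mk_Idx.symm))

def tau : Idx → TaskT := Function.invFun tauEmb

lemma tau_surj : Function.Surjective tau := fun t =>
  ⟨tauEmb t, Function.leftInverse_invFun tauEmb.injective t⟩

variable (A : Set ℝ)

def pickX (prev F : Set ℝ) : ℝ := Classical.epsilon fun x => x ∈ F ∧ x ∉ span ℚ prev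
def pickY (prev F : Set ℝ) : ℝ :=
  Classical.epsilon fun y => y ∈ F ∧ y ∉ span ℚ (insert (pickX prev F) prev)
def pickW (prev : Set ℝ) (a : ℝ) : ℝ := Classical.epsilon fun w => w ∉ span ℚ (insert a prev)

open scoped Classical in
def body (prev : Set ℝ) : TaskT → Set ℝ × Set ℝ
  | .inl F => if F.1.Countable then (∅, ∅) else ({pickX prev F.1}, {pickY prev F.1})
  | .inr a => if a ∈ A ∨ a < 0 then (∅, ∅)
      else ({pickW prev a}, {pickW prev a + a, pickW prev a - a})

def stage : Idx → Set ℝ × Set ℝ :=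
  wfIdx.fix fun i rec => body A (⋃ j, ⋃ h : j < i, ((rec j h).1 ∪ (rec j h).2)) (tau i)

def prevS (i : Idx) : Set ℝ := ⋃ j, ⋃ _ : j < i, ((stage A j).1 ∪ (stage A j).2)

lemma stage_eq (i : Idx) : stage A i = body A (prevS A i) (tau i) :=
  wfIdx.fix_eq (fun i rec => body A (⋃ j, ⋃ h : j < i, ((rec j h).1 ∪ (rec j h).2)) (tau i)) i

def XS (i : Idx) : Set ℝ := (stage A i).1
def CS (i : Idx) : Set ℝ := (stage A i).2
def prevX (i : Idx) : Set ℝ := ⋃ j, ⋃ _ : j < i, XS A j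
def prevC (i : Idx) : Set ℝ := ⋃ j, ⋃ _ : j < i, CS A j
def CX (i : Idx) : Set ℝ := prevX A i ∪ XS A i
def CC (i : Idx) : Set ℝ := prevC A i ∪ CS A i
def Xfin : Set ℝ := ⋃ j, XS A j
def Cfin : Set ℝ := ⋃ j, CS A j

lemma prevS_eq (i : Idx) : prevS A i = prevX A i ∪ prevC A i := by
  ext x
  simp only [prevS, prevX, prevC, mem_iUnion, mem_union, XS, CS]
  constructor
  · rintro ⟨j, hj, hx | hx⟩
    · exact Or.inl ⟨j, hj, hx⟩
    · exact Or.inr ⟨j, hj, hx⟩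
  · rintro (⟨j, hj, hx⟩ | ⟨j, hj, hx⟩)
    · exact ⟨j, hj, Or.inl hx⟩
    · exact ⟨j, hj, Or.inr hx⟩

lemma prevX_subset_prevS (i : Idx) : prevX A i ⊆ prevS A i := by
  rw [prevS_eq]; exact subset_union_left

lemma prevC_subset_prevS (i : Idx) : prevC A i ⊆ prevS A i := by
  rw [prevS_eq]; exact subset_union_right

lemma XS_subset_CX {j k : Idx} (h : j ≤ k) : XS A j ⊆ CX A k := by
  rcases lt_or_eq_of_le h with h | h
  · intro x hx
    exact Or.inl (mem_iUnion.mpr ⟨j, mem_iUnion.mpr ⟨h, hx⟩⟩)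
  · subst h; exact subset_union_right

lemma CS_subset_CC {j k : Idx} (h : j ≤ k) : CS A j ⊆ CC A k := by
  rcases lt_or_eq_of_le h with h | h
  · intro x hx
    exact Or.inl (mem_iUnion.mpr ⟨j, mem_iUnion.mpr ⟨h, hx⟩⟩)
  · subst h; exact subset_union_right

lemma CC_mono {j k : Idx} (h : j ≤ k) : CC A j ⊆ CC A k := by
  rintro x (hx | hx)
  · obtain ⟨j', hj', hx⟩ : ∃ j' : Idx, ∃ _ : j' < j, x ∈ CS A j' := by
      simpa only [prevC, mem_iUnion] using hx
    exact CS_subset_CC A (le_of_lt (lt_of_lt_of_le hj' h)) hx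
  · exact CS_subset_CC A h hx

lemma bad_Cfin {x : ℝ} (h : Bad A (Cfin A) x) : ∃ i, Bad A (CC A i) x := by
  induction h with
  | base hm =>
    obtain ⟨j, hj⟩ := mem_iUnion.mp hm
    exact ⟨j, .base (CS_subset_CC A le_rfl hj)⟩
  | step hb _ _ ih1 ih2 =>
    obtain ⟨i₁, h₁⟩ := ih1
    obtain ⟨i₂, h₂⟩ := ih2
    exact ⟨max i₁ i₂, .step hb (h₁.mono (CC_mono A (le_max_left _ _)))
      (h₂.mono (CC_mono A (le_max_right _ _)))⟩

lemma bad_prevC {i : Idx} {x : ℝ} (h : Bad A (prevC A i) x) :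
    ∃ j, j < i ∧ Bad A (CC A j) x := by
  induction h with
  | base hm =>
    rename_i z
    obtain ⟨j, hj, hm⟩ : ∃ j : Idx, ∃ _ : j < i, z ∈ CS A j := by
      simpa only [prevC, mem_iUnion] using hm
    exact ⟨j, hj, .base (CS_subset_CC A le_rfl hm)⟩
  | step hb _ _ ih1 ih2 =>
    obtain ⟨i₁, hi₁, h₁⟩ := ih1
    obtain ⟨i₂, hi₂, h₂⟩ := ih2
    exact ⟨max i₁ i₂, max_lt hi₁ hi₂, .step hb (h₁.mono (CC_mono A (le_max_left _ _)))
      (h₂.mono (CC_mono A (le_max_right _ _)))⟩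

lemma stage_countable (i : Idx) : ((stage A i).1 ∪ (stage A i).2).Countable := by
  rw [stage_eq]
  rcases tau i with F | a <;> simp only [body]
  · split_ifs
    · simp
    · exact (countable_singleton _).union (countable_singleton _)
  · split_ifs
    · simp
    · exact (countable_singleton _).union ((countable_singleton _).insert _)

lemma mk_prevS_lt (i : Idx) : #(prevS A i) < Cardinal.continuum := by
  have hsub : prevS A i ⊆ ⋃ j : {j : Idx // j < i}, ((stage A j.1).1 ∪ (stage A j.1).2) := by
    intro x hx
    obtain ⟨j, hj, hx⟩ : ∃ j : Idx, ∃ _ : j < i, x ∈ (stage A j).1 ∪ (stage A j).2 := by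
      simpa only [prevS, mem_iUnion] using hx
    exact mem_iUnion.mpr ⟨⟨j, hj⟩, hx⟩
  refine lt_of_le_of_lt (Cardinal.mk_le_mk_of_subset hsub) ?_
  refine lt_of_le_of_lt (Cardinal.mk_iUnion_le _) ?_
  refine Cardinal.mul_lt_of_lt Cardinal.aleph0_le_continuum (mk_Iio_idx i) ?_
  refine lt_of_le_of_lt (ciSup_le' fun j => ?_) Cardinal.aleph0_lt_continuum
  exact (stage_countable A j.1).le_aleph0

lemma mk_span_lt {s : Set ℝ} (h : #s < Cardinal.continuum) :
    #(span ℚ s : Set ℝ) < Cardinal.continuum :=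
  lt_of_le_of_lt (mk_span_le s) (max_lt h Cardinal.aleph0_lt_continuum)

lemma mk_insert_lt {s : Set ℝ} (h : #s < Cardinal.continuum) (a : ℝ) :
    #(insert a s : Set ℝ) < Cardinal.continuum := by
  refine lt_of_le_of_lt (Cardinal.mk_le_mk_of_subset (s := insert a s) (t := {a} ∪ s) (by simp)) ?_
  refine lt_of_le_of_lt (Cardinal.mk_union_le _ _) ?_
  exact Cardinal.add_lt_of_lt Cardinal.aleph0_le_continuum
    (lt_of_le_of_lt Cardinal.mk_le_aleph0 Cardinal.aleph0_lt_continuum) h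

lemma exists_not_in_span {s : Set ℝ} (h : #s < Cardinal.continuum) :
    ∃ w : ℝ, w ∉ span ℚ s := by
  by_contra hc
  push_neg at hc
  have huniv : (span ℚ s : Set ℝ) = Set.univ := eq_univ_of_forall hc
  have hlt := mk_span_lt h
  rw [huniv, Cardinal.mk_univ, Cardinal.mk_real] at hlt
  exact lt_irrefl _ hlt

lemma exists_mem_closed_not_span {F : Set ℝ} (hF : IsClosed F) (hc : ¬F.Countable)
    {s : Set ℝ} (hs : #s < Cardinal.continuum) : ∃ x, x ∈ F ∧ x ∉ span ℚ s := by
  obtain ⟨f, hrange, -, hinj⟩ := hF.exists_nat_bool_injection_of_not_countable hc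
  have hbig : Cardinal.continuum ≤ #F := by
    have h1 : #(ℕ → Bool) ≤ #F :=
      Cardinal.mk_le_of_injective (f := fun c => (⟨f c, hrange ⟨c, rfl⟩⟩ : F))
        fun a b hab => hinj (congrArg Subtype.val hab)
    refine le_trans (le_of_eq ?_) h1
    rw [← Cardinal.power_def, Cardinal.mk_bool, Cardinal.mk_nat, Cardinal.two_power_aleph0]
  by_contra hcon
  push_neg at hcon
  have hsub : F ⊆ (span ℚ s : Set ℝ) := fun x hx => hcon x hx
  exact absurd (le_trans hbig (Cardinal.mk_le_mk_of_subset hsub)) (not_le.mpr (mk_span_lt hs))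

theorem invariant (hA : A ⊆ Ici 0) (h0 : (0:ℝ) ∈ A) :
    ∀ i : Idx, ∀ x ∈ CX A i, ¬ Bad A (CC A i) x := by
  intro i
  refine wfIdx.induction (C := fun i => ∀ x ∈ CX A i, ¬ Bad A (CC A i) x) i ?_
  clear i; intro i IH
  have hprev : ∀ x ∈ prevX A i, ¬ Bad A (prevC A i) x := by
    intro x hx hbad
    obtain ⟨j₀, hj₀, hxj⟩ : ∃ j : Idx, ∃ _ : j < i, x ∈ XS A j := by
      simpa only [prevX, mem_iUnion] using hx
    obtain ⟨j₁, hj₁, hbj⟩ := bad_prevC A hbad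
    exact IH (max j₀ j₁) (max_lt hj₀ hj₁) x (XS_subset_CX A (le_max_left _ _) hxj)
      (hbj.mono (CC_mono A (le_max_right _ _)))
  rcases htau : tau i with ⟨F, hF⟩ | a
  · by_cases hcnt : F.Countable
    · have hXSe : XS A i = ∅ := by rw [XS, stage_eq, htau]; simp [body, hcnt]
      have hCSe : CS A i = ∅ := by rw [CS, stage_eq, htau]; simp [body, hcnt]
      intro z hz hbad
      simp only [CX, CC, hXSe, hCSe, union_empty] at hz hbad
      exact hprev z hz hbad
    · set P := prevS A i with hP
      set x₀ := pickX P F with hx₀def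
      set y₀ := pickY P F with hy₀def
      have hx₀ : x₀ ∈ F ∧ x₀ ∉ span ℚ P :=
        Classical.epsilon_spec (exists_mem_closed_not_span hF hcnt (mk_prevS_lt A i))
      have hy₀ : y₀ ∈ F ∧ y₀ ∉ span ℚ (insert x₀ P) :=
        Classical.epsilon_spec
          (exists_mem_closed_not_span hF hcnt (mk_insert_lt (mk_prevS_lt A i) x₀))
      have hXS : XS A i = {x₀} := by rw [XS, stage_eq, htau]; simp [body, hcnt]; rfl
      have hCS : CS A i = {y₀} := by rw [CS, stage_eq, htau]; simp [body, hcnt]; rfl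
      intro z hz hbad
      simp only [CC, hCS] at hbad
      have hpair : prevC A i ∪ {y₀} = prevC A i ∪ {y₀, y₀} := by simp
      rw [hpair] at hbad
      have hthin : ∀ t b, b ∈ A → t + b ∈ ({y₀, y₀} : Set ℝ) → t - b ∈ ({y₀, y₀} : Set ℝ) →
          t ∈ ({y₀, y₀} : Set ℝ) := by
        intro t b hb h1 h2
        simp only [mem_insert_iff, mem_singleton_iff, or_self] at h1 h2 ⊢
        linarith
      have hz' : z ∈ prevX A i ∨ z = x₀ := by
        simpa only [CX, hXS, mem_union, mem_singleton_iff] using hz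
      have hzmem : z ∈ span ℚ (insert x₀ P) := by
        rcases hz' with hz' | hz'
        · exact subset_span (mem_insert_of_mem _ (prevX_subset_prevS A i hz'))
        · rw [hz']; exact subset_span (mem_insert _ _)
      rcases bad_union_pair hthin hbad with hb | hb | hb
      · rcases hz' with hz'' | hz''
        · exact hprev z hz'' hb
        · refine hx₀.2 ?_
          rw [← hz'']
          exact span_mono (prevC_subset_prevS A i) hb.mem_span
      · have hzy : z = y₀ := by simpa using hb
        exact hy₀.2 (hzy ▸ hzmem)
      · obtain ⟨u, hu, q₁, q₂, hq₁, hq₂, hpos, hlt, heq⟩ := hb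
        have hu' : u ∈ span ℚ (insert x₀ P) :=
          span_mono ((prevC_subset_prevS A i).trans (subset_insert _ _)) hu
        have hqne : ((q₁:ℝ) + (q₂:ℝ)) ≠ 0 := by
          have h' : (0:ℝ) < (q₁:ℝ) + (q₂:ℝ) := by exact_mod_cast hpos
          linarith
        have hy : y₀ = ((q₁ + q₂)⁻¹ : ℚ) • (z - u) := by
          rw [Rat.smul_def]
          push_cast
          field_simp
          linear_combination -heq
        exact hy₀.2 (hy ▸ smul_mem _ _ (sub_mem hzmem hu'))
  · by_cases hgate : a ∈ A ∨ a < 0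
    · have hXSe : XS A i = ∅ := by rw [XS, stage_eq, htau]; simp [body, hgate]
      have hCSe : CS A i = ∅ := by rw [CS, stage_eq, htau]; simp [body, hgate]
      intro z hz hbad
      simp only [CX, CC, hXSe, hCSe, union_empty] at hz hbad
      exact hprev z hz hbad
    · push_neg at hgate
      obtain ⟨haA, ha0'⟩ := hgate
      have ha0 : 0 ≤ a := ha0'
      have hapos : 0 < a := lt_of_le_of_ne ha0 fun h => haA (h ▸ h0)
      have hgate' : ¬ (a ∈ A ∨ a < 0) := by push_neg; exact ⟨haA, ha0'⟩
      set P := prevS A i with hP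
      set w := pickW P a with hwdef
      have hw : w ∉ span ℚ (insert a P) :=
        Classical.epsilon_spec (exists_not_in_span (mk_insert_lt (mk_prevS_lt A i) a))
      have hXS : XS A i = {w} := by rw [XS, stage_eq, htau]; simp [body, hgate']; rfl
      have hCS : CS A i = {w + a, w - a} := by
        rw [CS, stage_eq, htau]; simp [body, hgate']; rfl
      intro z hz hbad
      simp only [CC, hCS] at hbad
      have hthin : ∀ t b, b ∈ A → t + b ∈ ({w + a, w - a} : Set ℝ) →
          t - b ∈ ({w + a, w - a} : Set ℝ) → t ∈ ({w + a, w - a} : Set ℝ) := by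
        intro t b hb h1 h2
        have hb0 : 0 ≤ b := hA hb
        simp only [mem_insert_iff, mem_singleton_iff] at h1 h2 ⊢
        rcases h1 with h1 | h1 <;> rcases h2 with h2 | h2
        · left; linarith
        · exfalso; have hba : b = a := by linarith
          exact haA (hba ▸ hb)
        · exfalso; have hba : b = -a := by linarith
          linarith
        · right; linarith
      have hz' : z ∈ prevX A i ∨ z = w := by
        simpa only [CX, hXS, mem_union, mem_singleton_iff] using hz
      have haspan : a ∈ span ℚ (insert a P) := subset_span (mem_insert _ _)
      have hpspan : ∀ z', z' ∈ prevX A i → z' ∈ span ℚ (insert a P) := fun z' hz'' =>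
        subset_span (mem_insert_of_mem _ (prevX_subset_prevS A i hz''))
      rcases bad_union_pair hthin hbad with hb | hb | hb
      · rcases hz' with hz'' | hz''
        · exact hprev z hz'' hb
        · refine hw ?_
          rw [← hz'']
          exact span_mono ((prevC_subset_prevS A i).trans (subset_insert _ _)) hb.mem_span
      · simp only [mem_insert_iff, mem_singleton_iff] at hb
        rcases hz' with hz'' | hz''
        · rcases hb with hb | hb
          · refine hw ?_
            have hwz : w = z - a := by linarith
            rw [hwz]; exact sub_mem (hpspan z hz'') haspan
          · refine hw ?_
            have hwz : w = z + a := by linarith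
            rw [hwz]; exact add_mem (hpspan z hz'') haspan
        · rw [hz''] at hb
          rcases hb with hb | hb <;> linarith
      · obtain ⟨u, hu, q₁, q₂, hq₁, hq₂, hpos, hlt, heq⟩ := hb
        have hu' : u ∈ span ℚ (insert a P) :=
          span_mono ((prevC_subset_prevS A i).trans (subset_insert _ _)) hu
        rcases hz' with hz'' | hz''
        · have hqne : ((q₁:ℝ) + (q₂:ℝ)) ≠ 0 := by
            have h' : (0:ℝ) < (q₁:ℝ) + (q₂:ℝ) := by exact_mod_cast hpos
            linarith
          have hweq : w = ((q₁ + q₂)⁻¹ : ℚ) • (z - u - (q₁ - q₂ : ℚ) • a) := by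
            rw [Rat.smul_def, Rat.smul_def]
            push_cast
            field_simp
            linear_combination -heq
          exact hw (hweq ▸ smul_mem _ _ (sub_mem (sub_mem (hpspan z hz'') hu')
            (smul_mem _ _ haspan)))
        · rw [hz''] at heq
          have hqne : (1:ℝ) - (q₁:ℝ) - (q₂:ℝ) ≠ 0 := by
            have h' : (q₁:ℝ) + (q₂:ℝ) < 1 := by exact_mod_cast hlt
            linarith
          have hweq : w = ((1 - q₁ - q₂)⁻¹ : ℚ) • (u + (q₁ - q₂ : ℚ) • a) := by
            rw [Rat.smul_def, Rat.smul_def]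
            push_cast
            field_simp
            linear_combination heq
          exact hw (hweq ▸ smul_mem _ _ (add_mem hu' (smul_mem _ _ haspan)))

lemma xfin_not_bad (hA : A ⊆ Ici 0) (h0 : (0:ℝ) ∈ A) {x : ℝ} (hx : x ∈ Xfin A) :
    ¬ Bad A (Cfin A) x := by
  intro hbad
  obtain ⟨j₀, hxj⟩ := mem_iUnion.mp hx
  obtain ⟨i₁, hbi⟩ := bad_Cfin A hbad
  exact invariant A hA h0 (max j₀ i₁) x (XS_subset_CX A (le_max_left _ _) hxj)
    (hbi.mono (CC_mono A (le_max_right _ _)))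

open scoped Classical in
def pick (z b : ℝ) : ℝ := if Bad A (Cfin A) (z + b) then z - b else z + b

inductive InX (A : Set ℝ) : ℝ → Prop
  | base {x : ℝ} : x ∈ Xfin A → InX A x
  | step {z b : ℝ} : InX A z → b ∈ A → InX A (pick A z b)

lemma inX_not_bad (hA : A ⊆ Ici 0) (h0 : (0:ℝ) ∈ A) {x : ℝ} (hx : InX A x) :
    ¬ Bad A (Cfin A) x := by
  induction hx with
  | base hm => exact xfin_not_bad A hA h0 hm
  | step hz hb ih =>
    rename_i z b
    rw [pick]
    split_ifs with h
    · intro hc; exact ih (.step hb h hc)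
    · exact h

lemma pick_dist (z b : ℝ) (hb : 0 ≤ b) : |z - pick A z b| = b := by
  rw [pick]; split_ifs
  · rw [show z - (z - b) = b by ring]; exact abs_of_nonneg hb
  · rw [show z - (z + b) = -b by ring, abs_neg]; exact abs_of_nonneg hb

end

theorem stmt13' (A : Set ℝ) (hA : A ⊆ Ici 0) (h0 : (0 : ℝ) ∈ A) :
    ∃ X : Set ℝ,
      (∀ F : Set ℝ, IsClosed F → ¬ F.Countable → (X ∩ F).Nonempty ∧ (Xᶜ ∩ F).Nonempty) ∧
      {a | 0 ≤ a ∧ ∀ x ∈ X, ∃ y ∈ X, |x - y| = a} = A := by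
  classical
  refine ⟨{x | InX A x}, ?_, ?_⟩
  · intro F hFc hFunc
    obtain ⟨i, hi⟩ := tau_surj (Sum.inl ⟨F, hFc⟩)
    have hx₀ : pickX (prevS A i) F ∈ F ∧ pickX (prevS A i) F ∉ span ℚ (prevS A i) :=
      Classical.epsilon_spec (exists_mem_closed_not_span hFc hFunc (mk_prevS_lt A i))
    have hy₀ : pickY (prevS A i) F ∈ F ∧
        pickY (prevS A i) F ∉ span ℚ (insert (pickX (prevS A i) F) (prevS A i)) :=
      Classical.epsilon_spec
        (exists_mem_closed_not_span hFc hFunc (mk_insert_lt (mk_prevS_lt A i) _))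
    have hXS : XS A i = {pickX (prevS A i) F} := by
      rw [XS, stage_eq, hi]; simp [body, hFunc]
    have hCS : CS A i = {pickY (prevS A i) F} := by
      rw [CS, stage_eq, hi]; simp [body, hFunc]
    constructor
    · exact ⟨pickX (prevS A i) F, InX.base (mem_iUnion.mpr ⟨i, by rw [hXS]; rfl⟩), hx₀.1⟩
    · refine ⟨pickY (prevS A i) F, ?_, hy₀.1⟩
      intro hmem
      exact inX_not_bad A hA h0 hmem (.base (mem_iUnion.mpr ⟨i, by rw [hCS]; rfl⟩))
  · ext a
    constructor
    · rintro ⟨ha0, hall⟩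
      by_contra haA
      obtain ⟨i, hi⟩ := tau_surj (Sum.inr a)
      have hgate' : ¬(a ∈ A ∨ a < 0) := by push_neg; exact ⟨haA, ha0⟩
      have hw : pickW (prevS A i) a ∉ span ℚ (insert a (prevS A i)) :=
        Classical.epsilon_spec (exists_not_in_span (mk_insert_lt (mk_prevS_lt A i) a))
      have hXS : XS A i = {pickW (prevS A i) a} := by
        rw [XS, stage_eq, hi]; simp [body, hgate']
      have hCS : CS A i = {pickW (prevS A i) a + a, pickW (prevS A i) a - a} := by
        rw [CS, stage_eq, hi]; simp [body, hgate']
      have hwX : InX A (pickW (prevS A i) a) :=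
        .base (mem_iUnion.mpr ⟨i, by rw [hXS]; rfl⟩)
      obtain ⟨y, hyX, hy⟩ := hall _ hwX
      have hycase : y = pickW (prevS A i) a - a ∨ y = pickW (prevS A i) a + a := by
        rcases (abs_eq ha0).mp hy with h | h
        · left; linarith
        · right; linarith
      have hyC : y ∈ CS A i := by
        rw [hCS]
        rcases hycase with h | h
        · exact Or.inr (by simp [h])
        · exact Or.inl (by simp [h])
      exact inX_not_bad A hA h0 hyX (.base (mem_iUnion.mpr ⟨i, hyC⟩))
    · intro ha
      exact ⟨hA ha, fun x hx => ⟨pick A x a, InX.step hx ha, pick_dist A x a (hA ha)⟩⟩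

end Stmt13

theorem stmt13 (A : Set ℝ) (hA : A ⊆ Ici 0) (h0 : (0 : ℝ) ∈ A) :
    ∃ X : Set ℝ, IsBernstein X ∧ centerOfDistances X = A := by
  obtain ⟨X, h1, h2⟩ := Stmt13.stmt13' A hA h0
  exact ⟨X, h1, h2⟩
end

section
/- There exist transfinite sequences (x_α)_{α<𝔠} and (y_α)_{α<𝔠} of reals such that for every α: x_α ∈ F_α \ lin_ℚ({x_β : β < α} ∪ {y_β : β < α}) and y_α ∈ F_α \ lin_ℚ({x_β : β ≤ α} ∪ {y_β : β < α}), where (F_α)_{α<𝔠} enumerates all uncountable closed subsets of ℝ. Consequently the family {x_α} ∪ {y_α} is ℚ-linearly independent, {x_α : α < 𝔠} meets every uncountable closed set, and {y_α : α < 𝔠} meets every uncountable closed set, with the two sets having disjoint ℚ-linear spans except at 0. -/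
open Set Cardinal

-- cardinality of span
lemma span_small (S : Set ℝ) (hS : #S < continuum) :
    #(Submodule.span ℚ S : Set ℝ) < continuum := by
  have h1 : (Submodule.span ℚ S : Set ℝ) ⊆
      Set.range (Finsupp.linearCombination ℚ ((↑) : S → ℝ)) := by
    intro x hx
    exact (Finsupp.mem_span_iff_linearCombination ℚ S x).mp hx
  have h2 : #(Submodule.span ℚ S : Set ℝ) ≤ #(S →₀ ℚ) :=
    (Cardinal.mk_le_mk_of_subset h1).trans Cardinal.mk_range_le
  rcases isEmpty_or_nonempty S with h | h
  · have : #(S →₀ ℚ) ≤ 1 := Cardinal.le_one_iff_subsingleton.mpr inferInstance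
    exact (h2.trans this).trans_lt (lt_of_lt_of_le one_lt_aleph0 aleph0_le_continuum)
  · have h3 := Cardinal.mk_finsupp_lift_of_infinite' S ℚ
    rw [Cardinal.lift_id, Cardinal.lift_id, Cardinal.mk_eq_aleph0 ℚ] at h3
    rw [h3] at h2
    exact h2.trans_lt (max_lt hS aleph0_lt_continuum)

lemma keyNE {A : Set ℝ} (hA : continuum ≤ #A) {S : Set ℝ} (hS : #S < continuum) :
    (A \ (Submodule.span ℚ S : Set ℝ)).Nonempty := by
  rw [Set.nonempty_iff_ne_empty]
  intro h
  have hsub : A ⊆ (Submodule.span ℚ S : Set ℝ) := Set.diff_eq_empty.mp h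
  exact absurd (hA.trans (Cardinal.mk_le_mk_of_subset hsub)) (span_small S hS).not_ge

lemma closed_big {C : Set ℝ} (hC : IsClosed C) (hunc : ¬ C.Countable) :
    continuum ≤ #C := by
  obtain ⟨f, hrange, -, hinj⟩ := hC.exists_nat_bool_injection_of_not_countable hunc
  have hinj' : Function.Injective (fun g : ℕ → Bool => (⟨f g, hrange (Set.mem_range_self g)⟩ : C)) := by
    intro a b hab
    exact hinj (congrArg Subtype.val hab)
  calc continuum = #(ℕ → Bool) := by
        rw [← Cardinal.power_def, Cardinal.mk_bool, Cardinal.mk_nat, two_power_aleph0]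
    _ ≤ #C := Cardinal.mk_le_of_injective hinj'

lemma li_of_span_lt {M : Type*} [AddCommGroup M] [Module ℚ M] {κ : Type*} [LinearOrder κ]
    (v : κ → M) (h : ∀ i, v i ∉ Submodule.span ℚ (v '' {j | j < i})) :
    LinearIndependent ℚ v := by
  rw [linearIndependent_iff]
  intro l hl
  by_contra hne
  have hsupp : l.support.Nonempty := Finsupp.support_nonempty_iff.mpr hne
  set i := l.support.max' hsupp with hi
  have hmem : i ∈ l.support := l.support.max'_mem hsupp
  have hli : l i ≠ 0 := Finsupp.mem_support_iff.mp hmem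
  apply h i
  have h0 : (l.support.sum fun j => l j • v j) = 0 := by
    simpa [Finsupp.linearCombination_apply, Finsupp.sum] using hl
  rw [← Finset.add_sum_erase _ _ hmem] at h0
  have hv : v i = (l i)⁻¹ • (-(∑ j ∈ l.support.erase i, l j • v j)) := by
    have heq : l i • v i = -(∑ j ∈ l.support.erase i, l j • v j) :=
      eq_neg_of_add_eq_zero_left h0
    rw [← heq, inv_smul_smul₀ hli]
  rw [hv]
  refine Submodule.smul_mem _ _ (Submodule.neg_mem _ (Submodule.sum_mem _ fun j hj =>
    Submodule.smul_mem _ _ (Submodule.subset_span ?_)))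
  have hjne := Finset.ne_of_mem_erase hj
  have hjle := Finset.le_max' _ j (Finset.mem_of_mem_erase hj)
  exact ⟨j, lt_of_le_of_ne hjle hjne, rfl⟩

lemma card_union_lt {s t : Set ℝ} (hs : #s < continuum) (ht : #t < continuum) :
    #(s ∪ t : Set ℝ) < continuum :=
  (Cardinal.mk_union_le s t).trans_lt (Cardinal.add_lt_of_lt aleph0_le_continuum hs ht)

lemma card_insert_lt' {s : Set ℝ} (hs : #s < continuum) (z : ℝ) :
    #(insert z s : Set ℝ) < continuum := by
  have := card_union_lt (s := {z}) (t := s)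
    (by simp; exact one_lt_aleph0.trans_le aleph0_le_continuum) hs
  simpa using this

lemma main_aux (ι : Type) (hι : #ι = continuum) (F : ι → Set ℝ)
    (hF2 : ∀ α, continuum ≤ #(F α)) :
    ∃ x y : ι → ℝ,
      LinearIndependent ℚ (fun p : ι × Bool => cond p.2 (y p.1) (x p.1)) ∧
      ∀ α, x α ∈ F α ∧ y α ∈ F α := by
  classical
  set j := Cardinal.continuum.ord.ToType with hjdef
  have hj : #j = continuum := Cardinal.mk_ord_toType _
  obtain ⟨e⟩ : Nonempty (j ≃ ι) := Cardinal.eq.mp (hj.trans hι.symm)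
  choose pick hpick using fun (α : ι) (S : Set ℝ) (hS : #S < continuum) =>
    keyNE (hF2 α) hS
  set P : ∀ a : j, ({b : j // b < a} → ℝ × ℝ) → Set ℝ :=
    fun a g => Set.range (fun p => (g p).1) ∪ Set.range (fun p => (g p).2) with hPdef
  have hP : ∀ (a : j) (g : {b : j // b < a} → ℝ × ℝ), #(P a g) < continuum := by
    intro a g
    have hsub : #{b : j // b < a} < continuum := Cardinal.mk_Iio_ord_toType a
    exact card_union_lt (Cardinal.mk_range_le.trans_lt hsub)
      (Cardinal.mk_range_le.trans_lt hsub)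
  set body : ∀ a : j, ({b : j // b < a} → ℝ × ℝ) → ℝ × ℝ := fun a g =>
    (pick (e a) (P a g) (hP a g),
     pick (e a) (insert (pick (e a) (P a g) (hP a g)) (P a g))
       (card_insert_lt' (hP a g) _)) with hbodydef
  obtain ⟨G, hG⟩ : ∃ G : j → ℝ × ℝ, ∀ a, G a = body a (fun p => G p.1) :=
    ⟨WellFounded.fix (wellFounded_lt (α := j)) (fun a IH => body a (fun p => IH p.1 p.2)),
     fun a => WellFounded.fix_eq _ _ a⟩
  set x' : j → ℝ := fun a => (G a).1 with hx'def
  set y' : j → ℝ := fun a => (G a).2 with hy'def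
  have hPimg : ∀ a : j, P a (fun p => G p.1) =
      x' '' {b | b < a} ∪ y' '' {b | b < a} := by
    intro a
    rw [hPdef]
    simp only [Set.image_eq_range]
    rfl
  have hkey : ∀ a : j,
      x' a ∈ F (e a) \ (Submodule.span ℚ (x' '' {b | b < a} ∪ y' '' {b | b < a}) : Set ℝ) ∧
      y' a ∈ F (e a) \ (Submodule.span ℚ
        (insert (x' a) (x' '' {b | b < a} ∪ y' '' {b | b < a})) : Set ℝ) := by
    intro a
    have h1 := hG a
    rw [hbodydef] at h1
    have h3 : x' a = pick (e a) (P a (fun p => G p.1)) (hP a _) := congrArg Prod.fst h1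
    constructor
    · rw [h3, ← hPimg a]
      exact hpick _ _ _
    · have h2 : y' a = pick (e a)
          (insert (pick (e a) (P a (fun p => G p.1)) (hP a _)) (P a (fun p => G p.1)))
          (card_insert_lt' (hP a _) _) := congrArg Prod.snd h1
      rw [h2, h3, ← hPimg a]
      exact hpick _ _ _
  set v : Lex (j × Bool) → ℝ := fun p => cond (ofLex p).2 (y' (ofLex p).1) (x' (ofLex p).1)
    with hvdef
  have hvLI : LinearIndependent ℚ v := by
    apply li_of_span_lt
    intro i
    obtain ⟨⟨a, b⟩, rfl⟩ : ∃ p : j × Bool, toLex p = i := ⟨ofLex i, rfl⟩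
    cases b
    · have himg : v '' {q | q < toLex (a, false)} =
          x' '' {b | b < a} ∪ y' '' {b | b < a} := by
        ext z
        constructor
        · rintro ⟨q, hq, rfl⟩
          obtain ⟨⟨c, d⟩, rfl⟩ : ∃ p : j × Bool, toLex p = q := ⟨ofLex q, rfl⟩
          rw [Set.mem_setOf_eq, Prod.Lex.lt_iff] at hq
          rcases hq with hc | ⟨-, hd⟩
          · cases d
            · exact Or.inl ⟨c, hc, rfl⟩
            · exact Or.inr ⟨c, hc, rfl⟩
          · exact absurd hd (by simp)
        · rintro (⟨c, hc, rfl⟩ | ⟨c, hc, rfl⟩)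
          · exact ⟨toLex (c, false), Prod.Lex.lt_iff.mpr (Or.inl hc), rfl⟩
          · exact ⟨toLex (c, true), Prod.Lex.lt_iff.mpr (Or.inl hc), rfl⟩
      rw [himg]
      exact (hkey a).1.2
    · have himg : v '' {q | q < toLex (a, true)} =
          insert (x' a) (x' '' {b | b < a} ∪ y' '' {b | b < a}) := by
        ext z
        constructor
        · rintro ⟨q, hq, rfl⟩
          obtain ⟨⟨c, d⟩, rfl⟩ : ∃ p : j × Bool, toLex p = q := ⟨ofLex q, rfl⟩
          rw [Set.mem_setOf_eq, Prod.Lex.lt_iff] at hq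
          rcases hq with hc | ⟨hceq, hd⟩
          · cases d
            · exact Or.inr (Or.inl ⟨c, hc, rfl⟩)
            · exact Or.inr (Or.inr ⟨c, hc, rfl⟩)
          · have hd' : d = false := by
              cases d
              · rfl
              · exact absurd hd (by simp)
            subst hd'
            cases hceq
            exact Or.inl rfl
        · rintro (rfl | ⟨c, hc, rfl⟩ | ⟨c, hc, rfl⟩)
          · exact ⟨toLex (a, false), Prod.Lex.lt_iff.mpr (Or.inr ⟨rfl, by simp⟩), rfl⟩
          · exact ⟨toLex (c, false), Prod.Lex.lt_iff.mpr (Or.inl hc), rfl⟩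
          · exact ⟨toLex (c, true), Prod.Lex.lt_iff.mpr (Or.inl hc), rfl⟩
      rw [himg]
      exact (hkey a).2.2
  refine ⟨fun α => x' (e.symm α), fun α => y' (e.symm α), ?_, ?_⟩
  · have hφ : Function.Injective (fun p : ι × Bool => toLex (e.symm p.1, p.2)) := by
      intro p q hpq
      have h := toLex.injective hpq
      obtain ⟨h1, h2⟩ := Prod.ext_iff.mp h
      exact Prod.ext (e.symm.injective h1) h2
    have := hvLI.comp _ hφ
    exact this
  · intro α
    have h1 := (hkey (e.symm α)).1.1
    have h2 := (hkey (e.symm α)).2.1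
    rw [e.apply_symm_apply] at h1 h2
    exact ⟨h1, h2⟩

theorem stmt18 (ι : Type) [LinearOrder ι] (hι : #ι = continuum)
    (F : ι → Set ℝ)
    (hF : ∀ G : Set ℝ, IsClosed G → ¬ G.Countable → ∃ α : ι, F α = G)
    (hFcl : ∀ α : ι, IsClosed (F α) ∧ ¬ (F α).Countable) :
    ∃ x y : ι → ℝ,
      (∀ α : ι, x α ∈ F α \
        (Submodule.span ℚ (x '' {β | β < α} ∪ y '' {β | β < α}) : Set ℝ)) ∧
      (∀ α : ι, y α ∈ F α \
        (Submodule.span ℚ (x '' {β | β ≤ α} ∪ y '' {β | β < α}) : Set ℝ)) ∧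
      LinearIndependent ℚ
        (fun r : (Set.range x ∪ Set.range y : Set ℝ) => (r : ℝ)) ∧
      (∀ G : Set ℝ, IsClosed G → ¬ G.Countable → ∃ α : ι, x α ∈ G) ∧
      (∀ G : Set ℝ, IsClosed G → ¬ G.Countable → ∃ α : ι, y α ∈ G) ∧
      Submodule.span ℚ (Set.range x) ⊓ Submodule.span ℚ (Set.range y) = ⊥ := by
  have hF2 : ∀ α, continuum ≤ #(F α) := fun α => closed_big (hFcl α).1 (hFcl α).2
  obtain ⟨x, y, hLI, hmem⟩ := main_aux ι hι F hF2
  set f : ι × Bool → ℝ := fun p => cond p.2 (y p.1) (x p.1) with hfdef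
  refine ⟨x, y, ?_, ?_, ?_, ?_, ?_, ?_⟩
  · intro α
    refine ⟨(hmem α).1, fun hsp => ?_⟩
    have hnot : (α, false) ∉ ({β | β < α} ×ˢ (Set.univ : Set Bool)) := by
      simp
    have hni := hLI.notMem_span_image (R := ℚ) hnot
    apply hni
    refine Submodule.span_mono ?_ hsp
    rintro z (⟨β, hβ, rfl⟩ | ⟨β, hβ, rfl⟩)
    · exact ⟨(β, false), ⟨hβ, trivial⟩, rfl⟩
    · exact ⟨(β, true), ⟨hβ, trivial⟩, rfl⟩
  · intro α
    refine ⟨(hmem α).2, fun hsp => ?_⟩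
    have hnot : (α, true) ∉
        ({β | β ≤ α} ×ˢ ({false} : Set Bool) ∪ {β | β < α} ×ˢ ({true} : Set Bool)) := by
      simp
    have hni := hLI.notMem_span_image (R := ℚ) hnot
    apply hni
    refine Submodule.span_mono ?_ hsp
    rintro z (⟨β, hβ, rfl⟩ | ⟨β, hβ, rfl⟩)
    · exact ⟨(β, false), Or.inl ⟨hβ, rfl⟩, rfl⟩
    · exact ⟨(β, true), Or.inr ⟨hβ, rfl⟩, rfl⟩
  · have h3 := (linearIndepOn_id_range_iff hLI.injective).mpr hLI
    have hre : Set.range f = Set.range x ∪ Set.range y := by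
      ext z
      constructor
      · rintro ⟨⟨β, b⟩, rfl⟩
        cases b
        · exact Or.inl ⟨β, rfl⟩
        · exact Or.inr ⟨β, rfl⟩
      · rintro (⟨β, rfl⟩ | ⟨β, rfl⟩)
        · exact ⟨(β, false), rfl⟩
        · exact ⟨(β, true), rfl⟩
    rw [hre] at h3
    exact h3
  · intro G hG hGc
    obtain ⟨α, rfl⟩ := hF G hG hGc
    exact ⟨α, (hmem α).1⟩
  · intro G hG hGc
    obtain ⟨α, rfl⟩ := hF G hG hGc
    exact ⟨α, (hmem α).2⟩
  · have h1 : Set.range x = f '' ((Set.univ : Set ι) ×ˢ ({false} : Set Bool)) := by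
      ext z
      constructor
      · rintro ⟨β, rfl⟩
        exact ⟨(β, false), ⟨trivial, rfl⟩, rfl⟩
      · rintro ⟨⟨β, b⟩, ⟨-, hb⟩, rfl⟩
        cases hb
        exact ⟨β, rfl⟩
    have h2 : Set.range y = f '' ((Set.univ : Set ι) ×ˢ ({true} : Set Bool)) := by
      ext z
      constructor
      · rintro ⟨β, rfl⟩
        exact ⟨(β, true), ⟨trivial, rfl⟩, rfl⟩
      · rintro ⟨⟨β, b⟩, ⟨-, hb⟩, rfl⟩
        cases hb
        exact ⟨β, rfl⟩
    have hd : Disjoint ((Set.univ : Set ι) ×ˢ ({false} : Set Bool))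
        ((Set.univ : Set ι) ×ˢ ({true} : Set Bool)) := by
      rw [Set.disjoint_left]
      rintro ⟨β, b⟩ ⟨-, hb1⟩ ⟨-, hb2⟩
      cases hb1
      exact Bool.false_ne_true hb2
    have := hLI.disjoint_span_image (R := ℚ) hd
    rw [← h1, ← h2] at this
    exact disjoint_iff.mp this
end

section
/- If D ⊆ ℝ is ℚ-linearly independent, B = {b_α : α < κ} ⊆ ℝ, and the elements x_α (α < κ) are chosen so that x_α ∉ lin_ℚ({b_β : β ≤ α} ∪ {x_β : β < α}), then for any α < κ, n ∈ ℕ, and any identity of the form 2·x_α·2^n = Σ_{s ∈ S} (x_{α_s} + x_{β_s} + δ_s·b_{α_s} + ε_s·b_{β_s}) with S a finite index set of size 2^n, δ_s, ε_s ∈ {−1, 1}, it follows that α_s = β_s = α for all s ∈ S. -/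
open Set

theorem stmt19 (ι : Type) [LinearOrder ι] (b x : ι → ℝ)
    (hD : LinearIndependent ℚ (fun r : Set.range b => (r : ℝ)))
    (hx : ∀ α : ι, x α ∉
      (Submodule.span ℚ (b '' {β | β ≤ α} ∪ x '' {β | β < α}) : Set ℝ))
    (α : ι) (n : ℕ) (σ : Type) (S : Finset σ) (hS : S.card = 2 ^ n)
    (as bs : σ → ι) (δ ε : σ → ℝ)
    (hδ : ∀ s ∈ S, δ s = -1 ∨ δ s = 1) (hε : ∀ s ∈ S, ε s = -1 ∨ ε s = 1)
    (heq : 2 * x α * 2 ^ n =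
      ∑ s ∈ S, (x (as s) + x (bs s) + δ s * b (as s) + ε s * b (bs s))) :
    ∀ s ∈ S, as s = α ∧ bs s = α := by
  classical
  by_contra hcon
  push_neg at hcon
  obtain ⟨s₀, hs₀, hbad⟩ := hcon
  set F : Finset ι := insert α (S.image as ∪ S.image bs) with hF
  have hFne : F.Nonempty := ⟨α, Finset.mem_insert_self _ _⟩
  set γ := F.max' hFne with hγdef
  have hαγ : α ≤ γ := F.le_max' α (Finset.mem_insert_self _ _)
  have hasγ : ∀ s ∈ S, as s ≤ γ := fun s hs => F.le_max' _
    (Finset.mem_insert_of_mem (Finset.mem_union_left _ (Finset.mem_image_of_mem as hs)))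
  have hbsγ : ∀ s ∈ S, bs s ≤ γ := fun s hs => F.le_max' _
    (Finset.mem_insert_of_mem (Finset.mem_union_right _ (Finset.mem_image_of_mem bs hs)))
  set M := Submodule.span ℚ (b '' {β | β ≤ γ} ∪ x '' {β | β < γ}) with hM
  have hbM : ∀ β, β ≤ γ → b β ∈ M := fun β hβ => Submodule.subset_span (Or.inl ⟨β, hβ, rfl⟩)
  have hxMlt : ∀ β, β < γ → x β ∈ M := fun β hβ => Submodule.subset_span (Or.inr ⟨β, hβ, rfl⟩)
  set g : σ → ℝ := fun s => (if as s = γ then 0 else x (as s)) +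
      (if bs s = γ then 0 else x (bs s)) + δ s * b (as s) + ε s * b (bs s) with hg
  have hgM : ∀ s ∈ S, g s ∈ M := by
    intro s hs
    refine M.add_mem (M.add_mem (M.add_mem ?_ ?_) ?_) ?_
    · split_ifs with h
      · exact M.zero_mem
      · exact hxMlt _ ((hasγ s hs).lt_of_ne h)
    · split_ifs with h
      · exact M.zero_mem
      · exact hxMlt _ ((hbsγ s hs).lt_of_ne h)
    · rcases hδ s hs with h | h <;> rw [h]
      · simpa using M.neg_mem (hbM _ (hasγ s hs))
      · simpa using hbM _ (hasγ s hs)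
    · rcases hε s hs with h | h <;> rw [h]
      · simpa using M.neg_mem (hbM _ (hbsγ s hs))
      · simpa using hbM _ (hbsγ s hs)
  set c : ℕ := (S.filter (fun s => as s = γ)).card + (S.filter (fun s => bs s = γ)).card
    with hc
  have hsum : (2:ℝ)^(n+1) * x α = (∑ s ∈ S, g s) + (c:ℝ) * x γ := by
    have h1 : ∀ s ∈ S, x (as s) + x (bs s) + δ s * b (as s) + ε s * b (bs s)
        = g s + ((if as s = γ then x γ else 0) + (if bs s = γ then x γ else 0)) := by
      intro s hs
      by_cases h1 : as s = γ <;> by_cases h2 : bs s = γ <;> simp [hg, h1, h2] <;> ring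
    have h2 : ∑ s ∈ S, (if as s = γ then x γ else 0)
        = ((S.filter (fun s => as s = γ)).card : ℝ) * x γ := by
      rw [← Finset.sum_filter, Finset.sum_const, nsmul_eq_mul]
    have h3 : ∑ s ∈ S, (if bs s = γ then x γ else 0)
        = ((S.filter (fun s => bs s = γ)).card : ℝ) * x γ := by
      rw [← Finset.sum_filter, Finset.sum_const, nsmul_eq_mul]
    calc (2:ℝ)^(n+1) * x α = 2 * x α * 2 ^ n := by ring
    _ = ∑ s ∈ S, (x (as s) + x (bs s) + δ s * b (as s) + ε s * b (bs s)) := heq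
    _ = ∑ s ∈ S, (g s + ((if as s = γ then x γ else 0) + (if bs s = γ then x γ else 0))) :=
        Finset.sum_congr rfl h1
    _ = (∑ s ∈ S, g s) + ((∑ s ∈ S, (if as s = γ then x γ else 0)) +
        (∑ s ∈ S, (if bs s = γ then x γ else 0))) := by
        simp only [hg, Finset.sum_add_distrib]
    _ = (∑ s ∈ S, g s) + (c:ℝ) * x γ := by
        rw [h2, h3, hc]; push_cast; ring
  rcases hαγ.lt_or_eq with hlt | heqγ
  · -- γ > α : x γ would lie in the span of smaller things
    have hcpos : 0 < c := by
      have hγF : γ ∈ F := F.max'_mem hFne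
      rw [hF] at hγF
      rcases Finset.mem_insert.1 hγF with h | h
      · exact absurd h hlt.ne'
      · rcases Finset.mem_union.1 h with h | h
        · obtain ⟨s, hs, hseq⟩ := Finset.mem_image.1 h
          have hmem : s ∈ S.filter (fun s => as s = γ) := Finset.mem_filter.2 ⟨hs, hseq⟩
          have := Finset.card_pos.2 ⟨s, hmem⟩
          omega
        · obtain ⟨s, hs, hseq⟩ := Finset.mem_image.1 h
          have hmem : s ∈ S.filter (fun s => bs s = γ) := Finset.mem_filter.2 ⟨hs, hseq⟩
          have := Finset.card_pos.2 ⟨s, hmem⟩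
          omega
    have hmem : ((c:ℚ)) • x γ ∈ M := by
      have hval : ((c:ℚ)) • x γ = (2:ℝ)^(n+1) * x α - ∑ s ∈ S, g s := by
        rw [Rat.smul_def]; push_cast; linarith [hsum]
      rw [hval]
      refine M.sub_mem ?_ (Submodule.sum_mem _ hgM)
      have : (2:ℝ)^(n+1) * x α = ((2:ℚ)^(n+1)) • x α := by
        rw [Rat.smul_def]; push_cast; ring
      rw [this]
      exact M.smul_mem _ (hxMlt _ hlt)
    have hxin : x γ ∈ M := by
      have h0 : (c:ℚ) ≠ 0 := Nat.cast_ne_zero.2 hcpos.ne'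
      have := M.smul_mem ((c:ℚ)⁻¹) hmem
      rwa [inv_smul_smul₀ h0] at this
    exact hx γ (by simpa [hM] using hxin)
  · -- γ = α : the coefficient of x α on the right is too small
    have hfle1 : (S.filter (fun s => as s = γ)).card ≤ S.card := Finset.card_filter_le _ _
    have hfle2 : (S.filter (fun s => bs s = γ)).card ≤ S.card := Finset.card_filter_le _ _
    have hclt : c < 2 ^ (n + 1) := by
      have hor : (S.filter (fun s => as s = γ)).card < S.card ∨
          (S.filter (fun s => bs s = γ)).card < S.card := by
        by_cases hA : as s₀ = α
        · right
          refine Finset.card_lt_card ⟨Finset.filter_subset _ _, fun hsub => hbad hA ?_⟩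
          exact ((Finset.mem_filter.1 (hsub hs₀)).2).trans heqγ.symm
        · left
          refine Finset.card_lt_card ⟨Finset.filter_subset _ _, fun hsub => hA ?_⟩
          exact ((Finset.mem_filter.1 (hsub hs₀)).2).trans heqγ.symm
      have hpow : 2 ^ (n + 1) = 2 ^ n + 2 ^ n := by ring
      omega
    set m : ℕ := 2 ^ (n + 1) - c with hm
    have hmpos : 0 < m := by omega
    have hval : ((m:ℚ)) • x α = ∑ s ∈ S, g s := by
      rw [Rat.smul_def, hm]
      push_cast [Nat.cast_sub hclt.le]
      have hsum' := hsum
      rw [← heqγ] at hsum'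
      linarith [hsum']
    have hmem : ((m:ℚ)) • x α ∈ M := by
      rw [hval]; exact Submodule.sum_mem _ hgM
    have hxin : x α ∈ M := by
      have h0 : (m:ℚ) ≠ 0 := Nat.cast_ne_zero.2 hmpos.ne'
      have := M.smul_mem ((m:ℚ)⁻¹) hmem
      rwa [inv_smul_smul₀ h0] at this
    rw [hM, ← heqγ] at hxin
    exact hx α (by simpa using hxin)
end
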